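/- arXiv:1103.5271 — 4 statements merged into one kernel-verified Lean document; each statement's English description precedes it below -/
import Mathlib

section
/- For every ε > 0 there exists C > 0 such that for every real N ≥ 1 and every v ∈ ℓ²(ℤ; ℂ): for each n ∈ ℤ the set of triples (n₁, n₂, n₃) ∈ ℤ³ with n = n₁ − n₂ + n₃, n₂ ≠ n₁, n₂ ≠ n₃, and |2(n − n₁)(n − n₃)| ≤ N is finite, and the function N₁₁(v)(n) := ∑ over this set of v_{n₁} · conj(v_{n₂}) · v_{n₃} belongs to ℓ²(ℤ; ℂ) with ‖N₁₁(v)‖ ≤ C N^{1/2 + ε} ‖v‖³. -/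
open scoped BigOperators ComplexConjugate

/-- The ℓ²(ℤ;ℂ) norm `(∑ₙ |vₙ|²)^{1/2}`. -/
noncomputable def l2norm (v : ℤ → ℂ) : ℝ := Real.sqrt (∑' n : ℤ, ‖v n‖ ^ 2)

/-- Membership in ℓ²(ℤ;ℂ). -/
def Memℓ2 (v : ℤ → ℂ) : Prop := Summable fun n : ℤ => ‖v n‖ ^ 2

/-- The phase `Φ = 2(n − n₁)(n − n₃)` for a triple `p = (n₁, n₂, n₃)`. -/
def phase (n : ℤ) (p : ℤ × ℤ × ℤ) : ℤ := 2 * (n - p.1) * (n - p.2.2)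

/-- The small-phase non-resonant condition: `n = n₁ − n₂ + n₃`, `n₂ ∉ {n₁, n₃}`,
`|2(n − n₁)(n − n₃)| ≤ N`. -/
def smallPhase (N : ℝ) (n : ℤ) (p : ℤ × ℤ × ℤ) : Prop :=
  n = p.1 - p.2.1 + p.2.2 ∧ p.2.1 ≠ p.1 ∧ p.2.1 ≠ p.2.2 ∧ |((phase n p : ℤ) : ℝ)| ≤ N

/-- The small-phase part `N₁₁(v)(n)` of the cubic nonlinearity. -/
noncomputable def N11 (N : ℝ) (v : ℤ → ℂ) (n : ℤ) : ℂ :=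
  ∑' p : {p : ℤ × ℤ × ℤ // smallPhase N n p}, v p.1.1 * conj (v p.1.2.1) * v p.1.2.2

/-!
Write `q = (n - n₁, n - n₃)`, so that `n₂ = n - q.1 - q.2`, the phase is `2 q.1 q.2`, and
`N₁₁(v)(n) = ∑_{q ∈ T} v(n - q.1) · conj v(n - q.1 - q.2) · v(n - q.2)` over the finite set
`T = {q : q.1 ≠ 0, q.2 ≠ 0, |2 q.1 q.2| ≤ N}`. Every `q ∈ T` has a coordinate of size at most
`⌈√N⌉`, so each line `q.1 ± q.2 = s` meets `T` in `K = O(√N)` points. With `a = |v|²`,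
Cauchy–Schwarz gives `|N₁₁(v)(n)|² ≤ (∑_q a(n - q.1) a(n - q.2)) · ∑_q a(n - q.1 - q.2)`; the
second factor is at most `K ‖v‖²` because `q.1 + q.2` has fibres of size `≤ K`, and summing the
first over `n` gives at most `K ‖v‖⁴` because `q.1 - q.2` does. Hence `‖N₁₁(v)‖ ≤ K ‖v‖³`.
-/

open Finset

noncomputable def smallPhasePairs (N : ℝ) : Finset (ℤ × ℤ) :=
  (Icc (-(⌈N⌉₊ : ℤ)) ⌈N⌉₊ ×ˢ Icc (-(⌈N⌉₊ : ℤ)) ⌈N⌉₊).filter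
    fun q => q.1 ≠ 0 ∧ q.2 ≠ 0 ∧ |((2 * q.1 * q.2 : ℤ) : ℝ)| ≤ N

lemma abs_le_abs_two_mul_mul {x y : ℤ} (hy : y ≠ 0) : |x| ≤ |2 * x * y| := by
  rw [abs_mul, abs_mul, abs_two]
  nlinarith [abs_nonneg x, Int.one_le_abs hy]

lemma mem_smallPhasePairs {N : ℝ} {q : ℤ × ℤ} :
    q ∈ smallPhasePairs N ↔ q.1 ≠ 0 ∧ q.2 ≠ 0 ∧ |((2 * q.1 * q.2 : ℤ) : ℝ)| ≤ N := by
  refine ⟨fun hq => (mem_filter.1 hq).2, fun hq => mem_filter.2 ⟨?_, hq⟩⟩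
  obtain ⟨h1, h2, hN⟩ := hq
  have hle : ∀ x y : ℤ, y ≠ 0 → |((2 * x * y : ℤ) : ℝ)| ≤ N → |x| ≤ (⌈N⌉₊ : ℤ) := by
    intro x y hy hxy
    have : ((|x| : ℤ) : ℝ) ≤ ⌈N⌉₊ := calc
      ((|x| : ℤ) : ℝ) ≤ ((|2 * x * y| : ℤ) : ℝ) := by exact_mod_cast abs_le_abs_two_mul_mul hy
      _ ≤ N := by rwa [Int.cast_abs]
      _ ≤ ⌈N⌉₊ := Nat.le_ceil N
    exact_mod_cast this
  rw [mem_product, mem_Icc, mem_Icc, ← abs_le, ← abs_le]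
  exact ⟨hle _ _ h2 hN, hle _ _ h1 (by rwa [mul_right_comm])⟩

lemma abs_fst_le_or_abs_snd_le_of_mem_smallPhasePairs {N : ℝ} {q : ℤ × ℤ}
    (hq : q ∈ smallPhasePairs N) : |q.1| ≤ (⌈√N⌉₊ : ℤ) ∨ |q.2| ≤ (⌈√N⌉₊ : ℤ) := by
  obtain ⟨-, -, hq⟩ := mem_smallPhasePairs.1 hq
  by_contra! h
  have hN : 0 ≤ N := (abs_nonneg _).trans hq
  have hsqrt : ∀ x : ℤ, (⌈√N⌉₊ : ℤ) < |x| → √N < |(x : ℝ)| := fun x hx =>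
    (Nat.le_ceil _).trans_lt (by rw [← Int.cast_abs]; exact_mod_cast hx)
  have hprod := mul_lt_mul'' (hsqrt _ h.1) (hsqrt _ h.2) (Real.sqrt_nonneg N) (Real.sqrt_nonneg N)
  rw [Real.mul_self_sqrt hN] at hprod
  push_cast at hq
  rw [abs_mul, abs_mul, abs_two] at hq
  nlinarith [abs_nonneg (q.1 : ℝ), abs_nonneg (q.2 : ℝ)]

lemma card_filter_add_mul_eq_le {T : Finset (ℤ × ℤ)} {R : ℕ}
    (hT : ∀ q ∈ T, |q.1| ≤ R ∨ |q.2| ≤ R) {e : ℤ} (he : e = 1 ∨ e = -1) (s : ℤ) :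
    #(T.filter fun q => q.1 + e * q.2 = s) ≤ 2 * (2 * R + 1) := by
  have hcard :
      #(T.filter fun q => q.1 + e * q.2 = s) ≤ #(Icc (-R : ℤ) R ∪ Icc (s - R) (s + R)) := by
    refine card_le_card_of_injOn Prod.fst (fun q hq => ?_) fun q hq q' hq' h => ?_
    · obtain ⟨hqT, hqs⟩ := mem_filter.1 hq
      have he' : |e * q.2| = |q.2| := by rcases he with rfl | rfl <;> simp
      rw [coe_union, Set.mem_union, coe_Icc, coe_Icc, Set.mem_Icc, Set.mem_Icc]
      rcases hT q hqT with h | h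
      · exact Or.inl (abs_le.1 h)
      · have := abs_le.1 (he'.trans_le h)
        exact Or.inr ⟨by omega, by omega⟩
    · have hs := (mem_filter.1 hq).2
      have hs' := (mem_filter.1 hq').2
      exact Prod.ext h (by rcases he with rfl | rfl <;> omega)
  refine hcard.trans ((card_union_le _ _).trans ?_)
  rw [Int.card_Icc, Int.card_Icc]
  omega

def pairToTriple (n : ℤ) (q : ℤ × ℤ) : ℤ × ℤ × ℤ := (n - q.1, n - q.1 - q.2, n - q.2)

lemma pairToTriple_injective (n : ℤ) : Function.Injective (pairToTriple n) := by
  intro q q' h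
  simp only [pairToTriple, Prod.ext_iff] at h ⊢
  omega

lemma setOf_smallPhase_eq (N : ℝ) (n : ℤ) :
    {p | smallPhase N n p} = ((smallPhasePairs N).image (pairToTriple n) : Set (ℤ × ℤ × ℤ)) := by
  ext ⟨n₁, n₂, n₃⟩
  simp only [Set.mem_ofPred_eq, coe_image, Set.mem_image, mem_coe, mem_smallPhasePairs,
    smallPhase, phase, pairToTriple, Prod.exists, Prod.mk.injEq]
  constructor
  · rintro ⟨rfl, h₁, h₃, hΦ⟩
    exact ⟨_, _, ⟨by omega, by omega, hΦ⟩, by ring, by ring, by ring⟩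
  · rintro ⟨a, b, ⟨ha, hb, hΦ⟩, rfl, rfl, rfl⟩
    refine ⟨by ring, by omega, by omega, ?_⟩
    simpa only [sub_sub_cancel] using hΦ

lemma finite_setOf_smallPhase (N : ℝ) (n : ℤ) : {p | smallPhase N n p}.Finite := by
  rw [setOf_smallPhase_eq]
  exact finite_toSet _

def trilinearSum (T : Finset (ℤ × ℤ)) (v : ℤ → ℂ) (n : ℤ) : ℂ :=
  ∑ q ∈ T, v (n - q.1) * conj (v (n - q.1 - q.2)) * v (n - q.2)

lemma N11_eq_trilinearSum (N : ℝ) : N11 N = trilinearSum (smallPhasePairs N) := by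
  ext v n
  change ∑' p : {p | smallPhase N n p}, v p.1.1 * conj (v p.1.2.1) * v p.1.2.2 = _
  rw [setOf_smallPhase_eq]
  exact (tsum_subtype' _ fun p : ℤ × ℤ × ℤ => v p.1 * conj (v p.2.1) * v p.2.2).trans
    (sum_image fun q _ q' _ h => pairToTriple_injective n h)

section Summation

variable {a : ℤ → ℝ}

lemma sum_sub_le_mul_tsum {ι : Type*} (ha0 : ∀ n, 0 ≤ a n) (ha : Summable a) {T : Finset ι}
    {σ : ι → ℤ} {K : ℕ} (hK : ∀ s, #(T.filter fun q => σ q = s) ≤ K) (c : ℤ) :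
    ∑ q ∈ T, a (c - σ q) ≤ K * ∑' n, a n := by
  classical
  rw [sum_comp (fun s => a (c - s)), ← (Equiv.subLeft c).tsum_eq a]
  calc ∑ s ∈ T.image σ, #(T.filter fun q => σ q = s) • a (c - s)
      ≤ ∑ s ∈ T.image σ, K * a (c - s) := sum_le_sum fun s _ => by
        rw [nsmul_eq_mul]
        exact mul_le_mul_of_nonneg_right (by exact_mod_cast hK s) (ha0 _)
    _ = K * ∑ s ∈ T.image σ, a (c - s) := (mul_sum ..).symm
    _ ≤ K * ∑' s, a (Equiv.subLeft c s) := mul_le_mul_of_nonneg_left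
        (((Equiv.subLeft c).summable_iff.2 ha).sum_le_tsum _ fun s _ => ha0 _) K.cast_nonneg

lemma summable_sum_mul_and_tsum_le (ha0 : ∀ n, 0 ≤ a n) (ha : Summable a) {T : Finset (ℤ × ℤ)}
    {K : ℕ} (hK : ∀ s, #(T.filter fun q => q.1 - q.2 = s) ≤ K) :
    Summable (fun n => ∑ q ∈ T, a (n - q.1) * a (n - q.2)) ∧
      ∑' n, ∑ q ∈ T, a (n - q.1) * a (n - q.2) ≤ K * (∑' n, a n) ^ 2 := by
  set S := ∑' n, a n
  have hcorr : ∀ c, Summable fun m => a m * a (m - c) := fun c =>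
    .of_nonneg_of_le (fun m => mul_nonneg (ha0 _) (ha0 _))
      (fun m => mul_le_mul_of_nonneg_left (ha.le_tsum _ fun n _ => ha0 n) (ha0 m)) (ha.mul_right S)
  -- substituting `n = m + q.2` turns each term into a correlation of `a` with a shift of itself
  have hterm : ∀ q : ℤ × ℤ, HasSum (fun n => a (n - q.1) * a (n - q.2))
      (∑' m, a m * a (m - (q.1 - q.2))) := fun q => by
    rw [← (Equiv.addRight q.2).hasSum_iff]
    convert (hcorr _).hasSum using 2 with m
    rw [Function.comp_apply, Equiv.coe_addRight, add_sub_cancel_right, mul_comm,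
      sub_sub_eq_add_sub]
  have hA := hasSum_sum fun q (_ : q ∈ T) => hterm q
  have hG : HasSum (fun m => a m * ∑ q ∈ T, a (m - (q.1 - q.2)))
      (∑ q ∈ T, ∑' m, a m * a (m - (q.1 - q.2))) := by
    simp_rw [mul_sum]
    exact hasSum_sum fun q _ => (hcorr _).hasSum
  refine ⟨hA.summable, ?_⟩
  rw [hA.tsum_eq]
  calc _ ≤ S * (K * S) := hasSum_le (fun m => mul_le_mul_of_nonneg_left
          (sum_sub_le_mul_tsum ha0 ha hK m) (ha0 m)) hG (ha.hasSum.mul_right _)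
    _ = K * S ^ 2 := by ring

end Summation

lemma norm_trilinearSum_sq_le (T : Finset (ℤ × ℤ)) (v : ℤ → ℂ) (n : ℤ) :
    ‖trilinearSum T v n‖ ^ 2 ≤ (∑ q ∈ T, ‖v (n - q.1)‖ ^ 2 * ‖v (n - q.2)‖ ^ 2) *
      ∑ q ∈ T, ‖v (n - q.1 - q.2)‖ ^ 2 := by
  calc ‖trilinearSum T v n‖ ^ 2
      ≤ (∑ q ∈ T, (‖v (n - q.1)‖ * ‖v (n - q.2)‖) * ‖v (n - q.1 - q.2)‖) ^ 2 := by
        refine pow_le_pow_left₀ (norm_nonneg _) ((norm_sum_le _ _).trans_eq ?_) 2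
        refine sum_congr rfl fun q _ => ?_
        rw [norm_mul, norm_mul, Complex.norm_conj]
        ring
    _ ≤ _ := by
        simpa only [mul_pow] using sum_mul_sq_le_sq_mul_sq T
          (fun q => ‖v (n - q.1)‖ * ‖v (n - q.2)‖) fun q => ‖v (n - q.1 - q.2)‖

lemma memℓ2_and_tsum_norm_trilinearSum_sq_le {T : Finset (ℤ × ℤ)} {K : ℕ}
    (hadd : ∀ s, #(T.filter fun q => q.1 + q.2 = s) ≤ K)
    (hsub : ∀ s, #(T.filter fun q => q.1 - q.2 = s) ≤ K) {v : ℤ → ℂ} (hv : Memℓ2 v) :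
    Memℓ2 (trilinearSum T v) ∧
      ∑' n, ‖trilinearSum T v n‖ ^ 2 ≤ K ^ 2 * (∑' n, ‖v n‖ ^ 2) ^ 3 := by
  set S := ∑' n, ‖v n‖ ^ 2
  have ha0 : ∀ n, 0 ≤ ‖v n‖ ^ 2 := fun n => sq_nonneg _
  obtain ⟨hAsum, hAle⟩ := summable_sum_mul_and_tsum_le ha0 hv hsub
  have hB : ∀ n, ∑ q ∈ T, ‖v (n - q.1 - q.2)‖ ^ 2 ≤ K * S := fun n => by
    simpa only [sub_sub] using sum_sub_le_mul_tsum ha0 hv hadd n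
  have hpt : ∀ n, ‖trilinearSum T v n‖ ^ 2 ≤
      (∑ q ∈ T, ‖v (n - q.1)‖ ^ 2 * ‖v (n - q.2)‖ ^ 2) * (K * S) := fun n =>
    (norm_trilinearSum_sq_le T v n).trans (mul_le_mul_of_nonneg_left (hB n)
      (sum_nonneg fun q _ => mul_nonneg (ha0 _) (ha0 _)))
  have hmem : Memℓ2 (trilinearSum T v) :=
    .of_nonneg_of_le (fun _ => sq_nonneg _) hpt (hAsum.mul_right _)
  refine ⟨hmem, ?_⟩
  have hS : 0 ≤ S := tsum_nonneg ha0
  calc _ ≤ _ := hmem.tsum_le_tsum hpt (hAsum.mul_right _)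
    _ = (∑' n, ∑ q ∈ T, ‖v (n - q.1)‖ ^ 2 * ‖v (n - q.2)‖ ^ 2) * (K * S) := tsum_mul_right
    _ ≤ K * S ^ 2 * (K * S) := mul_le_mul_of_nonneg_right hAle (by positivity)
    _ = K ^ 2 * S ^ 3 := by ring

lemma memℓ2_and_l2norm_trilinearSum_le {T : Finset (ℤ × ℤ)} {K : ℕ}
    (hadd : ∀ s, #(T.filter fun q => q.1 + q.2 = s) ≤ K)
    (hsub : ∀ s, #(T.filter fun q => q.1 - q.2 = s) ≤ K) {v : ℤ → ℂ} (hv : Memℓ2 v) :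
    Memℓ2 (trilinearSum T v) ∧ l2norm (trilinearSum T v) ≤ K * l2norm v ^ 3 := by
  obtain ⟨hmem, hle⟩ := memℓ2_and_tsum_norm_trilinearSum_sq_le hadd hsub hv
  refine ⟨hmem, (Real.sqrt_le_sqrt hle).trans_eq ?_⟩
  have hS : 0 ≤ ∑' n, ‖v n‖ ^ 2 := tsum_nonneg fun n => sq_nonneg _
  rw [l2norm, ← Real.sqrt_sq (by positivity : (0 : ℝ) ≤ K * √(∑' n, ‖v n‖ ^ 2) ^ 3), mul_pow,
    ← pow_mul, mul_comm 3 2, pow_mul, Real.sq_sqrt hS]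

lemma two_mul_two_mul_ceil_sqrt_add_one_le_rpow {N ε : ℝ} (hN : 1 ≤ N) (hε : 0 ≤ ε) :
    ((2 * (2 * ⌈√N⌉₊ + 1) : ℕ) : ℝ) ≤ 10 * N ^ ((1 : ℝ) / 2 + ε) := by
  have h1 : 1 ≤ √N := Real.one_le_sqrt.2 hN
  have hceil := Nat.ceil_lt_add_one (Real.sqrt_nonneg N)
  have hrpow : √N ≤ N ^ ((1 : ℝ) / 2 + ε) := by
    rw [Real.sqrt_eq_rpow]
    exact Real.rpow_le_rpow_of_exponent_le hN (by linarith)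
  push_cast
  linarith

/-- **Bound on the small-phase trilinear term `N₁₁`.** For every `ε > 0` there is `C > 0`
such that for all `N ≥ 1` and `v ∈ ℓ²(ℤ;ℂ)`: for each `n` the index set is finite, and
`N₁₁(v) ∈ ℓ²(ℤ;ℂ)` with `‖N₁₁(v)‖ ≤ C N^{1/2+ε} ‖v‖³`. -/
theorem N11_bound : ∀ ε > (0:ℝ), ∃ C > (0:ℝ), ∀ N : ℝ, 1 ≤ N → ∀ v : ℤ → ℂ, Memℓ2 v →
    (∀ n : ℤ, {p : ℤ × ℤ × ℤ | smallPhase N n p}.Finite) ∧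
    Memℓ2 (N11 N v) ∧
    l2norm (N11 N v) ≤ C * N ^ ((1:ℝ)/2 + ε) * l2norm v ^ 3 := by
  intro ε hε
  refine ⟨10, by norm_num, fun N hN v hv => ⟨finite_setOf_smallPhase N, ?_⟩⟩
  have hcross : ∀ q ∈ smallPhasePairs N, |q.1| ≤ (⌈√N⌉₊ : ℤ) ∨ |q.2| ≤ (⌈√N⌉₊ : ℤ) :=
    fun _ => abs_fst_le_or_abs_snd_le_of_mem_smallPhasePairs
  have hadd : ∀ s, #((smallPhasePairs N).filter fun q => q.1 + q.2 = s) ≤ 2 * (2 * ⌈√N⌉₊ + 1) := by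
    simpa only [one_mul] using card_filter_add_mul_eq_le hcross (Or.inl rfl)
  have hsub : ∀ s, #((smallPhasePairs N).filter fun q => q.1 - q.2 = s) ≤ 2 * (2 * ⌈√N⌉₊ + 1) := by
    simpa only [neg_one_mul, ← sub_eq_add_neg] using card_filter_add_mul_eq_le hcross (Or.inr rfl)
  rw [N11_eq_trilinearSum]
  obtain ⟨hmem, hle⟩ := memℓ2_and_l2norm_trilinearSum_le hadd hsub hv
  exact ⟨hmem, hle.trans (mul_le_mul_of_nonneg_right
    (two_mul_two_mul_ceil_sqrt_add_one_le_rpow hN hε.le) (pow_nonneg (Real.sqrt_nonneg _) 3))⟩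
end

section
/- For every ε > 0 there exists C > 0 such that for every real N ≥ 1, every t ∈ ℝ, and every v ∈ ℓ²(ℤ; ℂ): for each n ∈ ℤ the series N₂₁(v)(n) := ∑_{(n₁,n₂,n₃): n = n₁ − n₂ + n₃, n₂ ∉ {n₁,n₃}, |Φ| > N} (e^{−iΦt}/Φ) · v_{n₁} · conj(v_{n₂}) · v_{n₃}, where Φ = 2(n − n₁)(n − n₃), converges absolutely, and the resulting function n ↦ N₂₁(v)(n) belongs to ℓ²(ℤ; ℂ) with ‖N₂₁(v)‖ ≤ C N^{−1/2 + ε} ‖v‖³. -/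
open scoped BigOperators ComplexConjugate

/-- The large-phase non-resonant condition: `n = n₁ − n₂ + n₃`, `n₂ ∉ {n₁, n₃}`, `|Φ| > N`. -/
def largePhase (N : ℝ) (n : ℤ) (p : ℤ × ℤ × ℤ) : Prop :=
  n = p.1 - p.2.1 + p.2.2 ∧ p.2.1 ≠ p.1 ∧ p.2.1 ≠ p.2.2 ∧ N < |((phase n p : ℤ) : ℝ)|

/-- The summand `(e^{−iΦt}/Φ) v_{n₁} conj(v_{n₂}) v_{n₃}` of the boundary term `N₂₁`. -/
noncomputable def term21 (t : ℝ) (v : ℤ → ℂ) (n : ℤ) (p : ℤ × ℤ × ℤ) : ℂ :=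
  Complex.exp (-Complex.I * ((phase n p : ℤ) : ℂ) * (t : ℂ)) / ((phase n p : ℤ) : ℂ) *
    v p.1 * conj (v p.2.1) * v p.2.2

/-- The boundary term `N₂₁(v)(n)` from the first normal form reduction. -/
noncomputable def N21 (N t : ℝ) (v : ℤ → ℂ) (n : ℤ) : ℂ :=
  ∑' p : {p : ℤ × ℤ × ℤ // largePhase N n p}, term21 t v n p.1

/-! With `a = n - n₁`, `b = n - n₃` the phase is `Φ = 2ab`, so the sum defining `N₂₁(v)(n)` runs
over `{(a, b) : a, b ≠ 0, |2ab| > N}` and its terms have modulus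
`|2ab|⁻¹ |v (n - a)| |v (n - a - b)| |v (n - b)|`. Cauchy–Schwarz in `(a, b)` bounds `|N₂₁(v)(n)|²` by
`(∑ |2ab|⁻²) ∑_{a,b} |v (n - a)|² |v (n - a - b)|² |v (n - b)|²`. Summing over `n`, the substitution
`(n, a, b) ↦ (n₁, n₂, n₃)` turns the second factor into `‖v‖⁶`. For the first factor, split
`|2ab|⁻² = |2ab|^(s-2) |2ab|^(-s)` with `1 < s ≤ 1 + 2ε`: the first piece is at most `N^(s-2)`
and the second is summable over `ℤ²`. -/

lemma summable_mul_and_tsum_mul_le_sqrt {ι : Type*} {f g : ι → ℝ} (hf : ∀ i, 0 ≤ f i)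
    (hg : ∀ i, 0 ≤ g i) (hf2 : Summable fun i => f i ^ 2) (hg2 : Summable fun i => g i ^ 2) :
    (Summable fun i => f i * g i) ∧
      ∑' i, f i * g i ≤ √(∑' i, f i ^ 2) * √(∑' i, g i ^ 2) := by
  simpa only [Real.rpow_two, Real.sqrt_eq_rpow] using
    Real.summable_and_inner_le_Lp_mul_Lq_tsum_of_nonneg Real.HolderConjugate.two_two hf hg
      (by simpa only [Real.rpow_two] using hf2) (by simpa only [Real.rpow_two] using hg2)

lemma memℓ2_and_l2norm_le_of_norm_le {u : ℤ → ℂ} {G : ℤ → ℝ} {A : ℝ} (hA : 0 ≤ A)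
    (hG0 : ∀ n, 0 ≤ G n) (hG : Summable G) (hu : ∀ n, ‖u n‖ ≤ A * √(G n)) :
    Memℓ2 u ∧ l2norm u ≤ A * √(∑' n, G n) := by
  have hsq : ∀ n, ‖u n‖ ^ 2 ≤ A ^ 2 * G n := fun n => by
    simpa only [mul_pow, Real.sq_sqrt (hG0 n)] using pow_le_pow_left₀ (norm_nonneg _) (hu n) 2
  have hmem : Memℓ2 u := Summable.of_nonneg_of_le (fun n => sq_nonneg _) hsq (hG.mul_left _)
  refine ⟨hmem, ?_⟩
  calc l2norm u ≤ √(∑' n, A ^ 2 * G n) :=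
        Real.sqrt_le_sqrt (hmem.tsum_le_tsum hsq (hG.mul_left _))
    _ = A * √(∑' n, G n) := by
        rw [tsum_mul_left, Real.sqrt_mul (sq_nonneg A), Real.sqrt_sq hA]

lemma sqrt_tsum_sq_norm_pow_three (v : ℤ → ℂ) : √((∑' m, ‖v m‖ ^ 2) ^ 3) = l2norm v ^ 3 := by
  rw [l2norm, ← Real.sqrt_sq (pow_nonneg (Real.sqrt_nonneg _) 3), ← pow_mul, mul_comm, pow_mul,
    Real.sq_sqrt (tsum_nonneg fun _ => sq_nonneg _)]

/-- `f n₁ f n₂ f n₃` in the coordinates `(a, b) = (n - n₁, n - n₃)` of the triples with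
`n = n₁ - n₂ + n₃`. -/
def tripleProd (f : ℤ → ℝ) (n : ℤ) (q : ℤ × ℤ) : ℝ :=
  f (n - q.1) * (f (n - q.1 - q.2) * f (n - q.2))

lemma tripleProd_nonneg {f : ℤ → ℝ} (hf : ∀ m, 0 ≤ f m) (n : ℤ) (q : ℤ × ℤ) :
    0 ≤ tripleProd f n q :=
  mul_nonneg (hf _) (mul_nonneg (hf _) (hf _))

lemma tripleProd_sq (f : ℤ → ℝ) (n : ℤ) (q : ℤ × ℤ) :
    tripleProd f n q ^ 2 = tripleProd (fun m => f m ^ 2) n q := by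
  simp only [tripleProd]; ring

def freqEquiv : ℤ × ℤ × ℤ ≃ ℤ × ℤ × ℤ where
  toFun x := (x.1 - x.2.1, x.1 - x.2.1 - x.2.2, x.1 - x.2.2)
  invFun m := (m.1 - m.2.1 + m.2.2, m.2.2 - m.2.1, m.1 - m.2.1)
  left_inv x := by ext <;> simp
  right_inv m := by ext <;> simp <;> ring

lemma summable_tripleProd_and_hasSum {f : ℤ → ℝ} (hf0 : ∀ m, 0 ≤ f m) (hf : Summable f) :
    (∀ n, Summable (tripleProd f n)) ∧
      HasSum (fun n => ∑' q, tripleProd f n q) ((∑' m, f m) ^ 3) := by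
  have hf2 := hf.mul_of_nonneg hf hf0 hf0
  have hf3 := hf.mul_of_nonneg hf2 hf0 fun q => mul_nonneg (hf0 q.1) (hf0 q.2)
  have hprod : HasSum (fun m : ℤ × ℤ × ℤ => f m.1 * (f m.2.1 * f m.2.2)) ((∑' m, f m) ^ 3) := by
    convert hf3.hasSum using 1
    rw [← hf.tsum_mul_tsum hf2 hf3, ← hf.tsum_mul_tsum hf hf2]
    ring
  have hT : HasSum (fun x : ℤ × ℤ × ℤ => tripleProd f x.1 x.2) ((∑' m, f m) ^ 3) :=
    freqEquiv.hasSum_iff.mpr hprod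
  have hrow := ((summable_prod_of_nonneg fun x => tripleProd_nonneg hf0 x.1 x.2).mp
    hT.summable).1
  exact ⟨hrow, hT.prod_fiberwise fun n => (hrow n).hasSum⟩

lemma inv_sq_le_rpow_mul {N s x y : ℝ} (hN : 0 < N) (hs0 : 0 ≤ s) (hs2 : s ≤ 2) (hx : x ≠ 0)
    (hy : y ≠ 0) (hxy : N < |2 * x * y|) :
    |2 * x * y|⁻¹ ^ 2 ≤ N ^ (s - 2) * (|x| ^ (-s) * |y| ^ (-s)) := by
  have hP : 0 < |x| * |y| := by positivity
  have h2P : 0 < 2 * (|x| * |y|) := by positivity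
  rw [show |2 * x * y| = 2 * (|x| * |y|) by rw [abs_mul, abs_mul, abs_two, mul_assoc]] at hxy ⊢
  calc (2 * (|x| * |y|))⁻¹ ^ 2 = (2 * (|x| * |y|)) ^ (s - 2) * (2 * (|x| * |y|)) ^ (-s) := by
        rw [← Real.rpow_add h2P, show s - 2 + -s = -2 by ring, Real.rpow_neg h2P.le,
          Real.rpow_two, inv_pow]
    _ ≤ N ^ (s - 2) * (|x| * |y|) ^ (-s) := by
        gcongr ?_ * ?_
        · exact Real.rpow_le_rpow_of_nonpos hN hxy.le (by linarith)
        · exact Real.rpow_le_rpow_of_nonpos hP (by linarith) (by linarith)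
    _ = N ^ (s - 2) * (|x| ^ (-s) * |y| ^ (-s)) := by
        rw [Real.mul_rpow (abs_nonneg _) (abs_nonneg _)]

/-- The large-phase condition in the coordinates `(a, b) = (n - n₁, n - n₃)`, where `Φ = 2ab`. -/
def LargeProd (N : ℝ) (q : ℤ × ℤ) : Prop :=
  q.1 ≠ 0 ∧ q.2 ≠ 0 ∧ N < |2 * (q.1 : ℝ) * q.2|

lemma summable_and_tsum_inv_sq_le {N s : ℝ} (hN : 0 < N) (hs1 : 1 < s) (hs2 : s ≤ 2) :
    (Summable fun q : {q : ℤ × ℤ // LargeProd N q} => |2 * (q.1.1 : ℝ) * q.1.2|⁻¹ ^ 2) ∧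
      ∑' q : {q : ℤ × ℤ // LargeProd N q}, |2 * (q.1.1 : ℝ) * q.1.2|⁻¹ ^ 2 ≤
        N ^ (s - 2) * (∑' a : ℤ, |(a : ℝ)| ^ (-s)) ^ 2 := by
  set g : ℤ → ℝ := fun a => |(a : ℝ)| ^ (-s)
  have hg : Summable g := Real.summable_abs_int_rpow hs1
  have hg0 : ∀ a, 0 ≤ g a := fun a => by positivity
  have hgg := hg.mul_of_nonneg hg hg0 hg0
  have hbound : Summable fun q : ℤ × ℤ => N ^ (s - 2) * (g q.1 * g q.2) := hgg.mul_left _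
  have hle : ∀ q : {q : ℤ × ℤ // LargeProd N q},
      |2 * (q.1.1 : ℝ) * q.1.2|⁻¹ ^ 2 ≤ N ^ (s - 2) * (g q.1.1 * g q.1.2) :=
    fun ⟨_, ha, hb, hq⟩ => inv_sq_le_rpow_mul hN (by linarith) hs2 (by exact_mod_cast ha)
      (by exact_mod_cast hb) hq
  have hsum := Summable.of_nonneg_of_le (fun _ => sq_nonneg _) hle (hbound.subtype _)
  refine ⟨hsum, ?_⟩
  calc _ ≤ ∑' q : {q : ℤ × ℤ // LargeProd N q}, N ^ (s - 2) * (g q.1.1 * g q.1.2) :=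
        hsum.tsum_le_tsum hle (hbound.subtype _)
    _ ≤ ∑' q : ℤ × ℤ, N ^ (s - 2) * (g q.1 * g q.2) :=
        hbound.tsum_subtype_le _ _ fun _ => by positivity
    _ = _ := by rw [tsum_mul_left, ← hg.tsum_mul_tsum hg hgg, sq]

def largePhaseEquiv (N : ℝ) (n : ℤ) :
    {q : ℤ × ℤ // LargeProd N q} ≃ {p : ℤ × ℤ × ℤ // largePhase N n p} where
  toFun q := ⟨(n - q.1.1, n - q.1.1 - q.1.2, n - q.1.2), by
    obtain ⟨⟨a, b⟩, ha, hb, h⟩ := q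
    refine ⟨by ring, by dsimp only; omega, by dsimp only; omega, ?_⟩
    simpa [phase] using h⟩
  invFun p := ⟨(n - p.1.1, n - p.1.2.2), by
    obtain ⟨⟨n₁, n₂, n₃⟩, hn, h₁, h₃, h⟩ := p
    dsimp only at hn h₁ h₃ ⊢
    refine ⟨by omega, by omega, ?_⟩
    simpa [phase] using h⟩
  left_inv q := by ext <;> simp
  right_inv p := by
    obtain ⟨⟨n₁, n₂, n₃⟩, hn, -⟩ := p
    dsimp only at hn
    ext <;> simp; omega

lemma norm_term21 (t : ℝ) (v : ℤ → ℂ) (n : ℤ) (p : ℤ × ℤ × ℤ) :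
    ‖term21 t v n p‖ = |(phase n p : ℝ)|⁻¹ * (‖v p.1‖ * ‖v p.2.1‖ * ‖v p.2.2‖) := by
  have hexp : ‖Complex.exp (-Complex.I * (phase n p : ℂ) * t)‖ = 1 := by
    rw [Complex.norm_exp]; simp
  simp only [term21, norm_mul, norm_div, hexp, Complex.norm_intCast, RCLike.norm_conj]
  ring

lemma norm_term21_largePhaseEquiv (N t : ℝ) (v : ℤ → ℂ) (n : ℤ)
    (q : {q : ℤ × ℤ // LargeProd N q}) :
    ‖term21 t v n (largePhaseEquiv N n q)‖ =
      |2 * (q.1.1 : ℝ) * q.1.2|⁻¹ * tripleProd (‖v ·‖) n q.1 := by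
  show ‖term21 t v n (n - q.1.1, n - q.1.1 - q.1.2, n - q.1.2)‖ = _
  rw [norm_term21]
  simp only [phase, tripleProd, sub_sub_cancel]
  push_cast
  ring

lemma summable_norm_term21_and_norm_N21_le {N t : ℝ} {v : ℤ → ℂ} {n : ℤ}
    (hw : Summable fun q : {q : ℤ × ℤ // LargeProd N q} => |2 * (q.1.1 : ℝ) * q.1.2|⁻¹ ^ 2)
    (hv : Summable fun q => tripleProd (‖v ·‖) n q ^ 2) :
    (Summable fun p : {p : ℤ × ℤ × ℤ // largePhase N n p} => ‖term21 t v n p.1‖) ∧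
      ‖N21 N t v n‖ ≤
        √(∑' q : {q : ℤ × ℤ // LargeProd N q}, |2 * (q.1.1 : ℝ) * q.1.2|⁻¹ ^ 2) *
          √(∑' q, tripleProd (‖v ·‖) n q ^ 2) := by
  obtain ⟨hsum, hCS⟩ := summable_mul_and_tsum_mul_le_sqrt
    (g := fun q : {q : ℤ × ℤ // LargeProd N q} => tripleProd (‖v ·‖) n q.1)
    (fun _ => inv_nonneg.mpr (abs_nonneg _))
    (fun q => tripleProd_nonneg (fun _ => norm_nonneg _) n q.1) hw (hv.subtype _)
  simp only [← norm_term21_largePhaseEquiv N t v n] at hsum hCS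
  have hterm : Summable fun p : {p // largePhase N n p} => ‖term21 t v n p.1‖ :=
    (largePhaseEquiv N n).summable_iff.mp hsum
  refine ⟨hterm, ?_⟩
  calc ‖N21 N t v n‖ ≤ ∑' p : {p // largePhase N n p}, ‖term21 t v n p.1‖ :=
        norm_tsum_le_tsum_norm hterm
    _ = ∑' q, ‖term21 t v n (largePhaseEquiv N n q)‖ :=
        ((largePhaseEquiv N n).tsum_eq fun p => ‖term21 t v n p.1‖).symm
    _ ≤ _ := hCS
    _ ≤ _ := by gcongr; exact hv.tsum_subtype_le _ _ fun _ => sq_nonneg _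

/-- **Bound on the boundary term `N₂₁`.** For every `ε > 0` there is `C > 0` such that for
every `N ≥ 1`, every `t ∈ ℝ`, and every `v ∈ ℓ²(ℤ;ℂ)`: the series defining `N₂₁(v)(n)`
converges absolutely for each `n`, and `N₂₁(v) ∈ ℓ²(ℤ;ℂ)` with
`‖N₂₁(v)‖ ≤ C N^{−1/2+ε} ‖v‖³`. -/
theorem N21_bound : ∀ ε > (0:ℝ), ∃ C > (0:ℝ), ∀ N : ℝ, 1 ≤ N → ∀ t : ℝ,
    ∀ v : ℤ → ℂ, Memℓ2 v →
    (∀ n : ℤ, Summable fun p : {p : ℤ × ℤ × ℤ // largePhase N n p} => ‖term21 t v n p.1‖) ∧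
    Memℓ2 (N21 N t v) ∧
    l2norm (N21 N t v) ≤ C * N ^ (-(1:ℝ)/2 + ε) * l2norm v ^ 3 := by
  intro ε hε
  set s := min (1 + 2 * ε) 2
  have hs1 : 1 < s := lt_min (by linarith) one_lt_two
  have hs2 : s ≤ 2 := min_le_right _ _
  set K := ∑' a : ℤ, |(a : ℝ)| ^ (-s)
  have hK : 0 < K := (Real.summable_abs_int_rpow hs1).tsum_pos (fun _ => by positivity) 1 (by simp)
  refine ⟨K, hK, fun N hN t v hv => ?_⟩
  have hN0 : 0 < N := one_pos.trans_le hN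
  obtain ⟨hw, hW⟩ := summable_and_tsum_inv_sq_le hN0 hs1 hs2
  obtain ⟨hrow, hcol⟩ := summable_tripleProd_and_hasSum (fun _ => sq_nonneg _) hv
  simp only [← tripleProd_sq] at hcol
  have hpt (n : ℤ) := summable_norm_term21_and_norm_N21_le (t := t) hw
    (by simpa only [tripleProd_sq] using hrow n)
  obtain ⟨hmem, hl2⟩ := memℓ2_and_l2norm_le_of_norm_le (Real.sqrt_nonneg _)
    (fun n => tsum_nonneg fun _ => sq_nonneg _) hcol.summable fun n => (hpt n).2
  refine ⟨fun n => (hpt n).1, hmem, hl2.trans ?_⟩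
  rw [hcol.tsum_eq, sqrt_tsum_sq_norm_pow_three]
  have hv3 : 0 ≤ l2norm v ^ 3 := pow_nonneg (Real.sqrt_nonneg _) 3
  calc _ ≤ √(N ^ (s - 2) * K ^ 2) * l2norm v ^ 3 := by gcongr
    _ = K * N ^ ((s - 2) / 2) * l2norm v ^ 3 := by
        rw [Real.sqrt_mul (by positivity), Real.sqrt_sq hK.le, Real.sqrt_eq_rpow,
          ← Real.rpow_mul hN0.le]
        ring_nf
    _ ≤ K * N ^ (-(1:ℝ)/2 + ε) * l2norm v ^ 3 := by
        gcongr
        linarith [min_le_left (1 + 2 * ε) 2]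
end

section
/- For every ε > 0 there exists C > 0 such that for every real N ≥ 1, every t ∈ ℝ, and all v, w ∈ ℓ²(ℤ; ℂ), with N₂₁(v)(n) := ∑_{(n₁,n₂,n₃): n = n₁ − n₂ + n₃, n₂ ∉ {n₁,n₃}, |Φ| > N} (e^{−iΦt}/Φ) · v_{n₁} · conj(v_{n₂}) · v_{n₃} where Φ = 2(n − n₁)(n − n₃) (an absolutely convergent series for each n), one has ‖N₂₁(v) − N₂₁(w)‖ ≤ C N^{−1/2 + ε} (‖v‖² + ‖w‖²) ‖v − w‖ in ℓ²(ℤ; ℂ). -/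
open scoped BigOperators ComplexConjugate

/-! With `a = n - n₁` and `b = n - n₃` (so `n₂ = n - a - b`), the triples with
`n = n₁ - n₂ + n₃` are parametrised by `(a, b) ∈ ℤ²`, and `Φ = 2ab`. Hence
`|N₂₁(v)(n) - N₂₁(w)(n)|` is at most a sum of three trilinear convolutions of `|v|, |w|, |v - w|`
against the kernel `K(a, b) = |2ab|⁻¹ 1_{|2ab| > N}`. Cauchy–Schwarz in `(a, b)`, followed by the
change of variables `(n, a, b) ↦ (n₁, n₂, n₃)`, bounds the ℓ² norm of such a convolution by
`‖K‖ ‖F‖ ‖G‖ ‖H‖`. Finally `|2ab|⁻² ≤ N^{s-2} |a|^{-s} |b|^{-s}` on `|2ab| > N` for `s ≤ 2`, so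
`‖K‖² ≤ N^{s-2} (∑ₐ |a|^{-s})²`, which is finite and `≲ N^{-1+2ε}` for `s = 1 + min ε 1`. -/

open scoped ENNReal

namespace ENNReal

variable {ι : Type*} [Countable ι]

theorem tsum_mul_sq_le (f g : ι → ℝ≥0∞) :
    (∑' i, f i * g i) ^ 2 ≤ (∑' i, f i ^ 2) * ∑' i, g i ^ 2 := by
  let _ : MeasurableSpace ι := ⊤
  have h := lintegral_mul_le_Lp_mul_Lq MeasureTheory.Measure.count Real.HolderConjugate.two_two
    measurable_from_top.aemeasurable measurable_from_top.aemeasurable (f := f) (g := g)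
  simp only [MeasureTheory.lintegral_count, Pi.mul_apply, ENNReal.rpow_two, one_div] at h
  calc (∑' i, f i * g i) ^ 2
      ≤ ((∑' i, f i ^ 2) ^ (2⁻¹ : ℝ) * (∑' i, g i ^ 2) ^ (2⁻¹ : ℝ)) ^ 2 := by gcongr
    _ = (∑' i, f i ^ 2) * ∑' i, g i ^ 2 := by
      have hsqrt (x : ℝ≥0∞) : (x ^ (2⁻¹ : ℝ)) ^ 2 = x := by
        exact_mod_cast rpow_inv_natCast_pow two_ne_zero x
      rw [mul_pow, hsqrt, hsqrt]

theorem add_add_sq_le (a b c : ℝ≥0∞) : (a + b + c) ^ 2 ≤ 3 * (a ^ 2 + b ^ 2 + c ^ 2) := by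
  rcases eq_or_ne a ⊤ with rfl | ha
  · simp
  rcases eq_or_ne b ⊤ with rfl | hb
  · simp
  rcases eq_or_ne c ⊤ with rfl | hc
  · simp
  lift a to NNReal using ha
  lift b to NNReal using hb
  lift c to NNReal using hc
  have key : (a + b + c) ^ 2 ≤ 3 * (a ^ 2 + b ^ 2 + c ^ 2) := by
    rw [← NNReal.coe_le_coe]
    push_cast
    nlinarith [sq_nonneg ((a:ℝ) - b), sq_nonneg ((b:ℝ) - c), sq_nonneg ((a:ℝ) - c)]
  exact_mod_cast key

end ENNReal

section TrilinearConvolution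

noncomputable def triConv (K : ℤ × ℤ → ℝ≥0∞) (F G H : ℤ → ℝ≥0∞) (n : ℤ) : ℝ≥0∞ :=
  ∑' q : ℤ × ℤ, K q * (F (n - q.1) * G (n - q.1 - q.2) * H (n - q.2))

def convCoordEquiv : ℤ × ℤ × ℤ ≃ ℤ × ℤ × ℤ where
  toFun r := (r.1 - r.2.1, r.1 - r.2.1 - r.2.2, r.1 - r.2.2)
  invFun s := (s.1 - s.2.1 + s.2.2, s.2.2 - s.2.1, s.1 - s.2.1)
  left_inv := by rintro ⟨n, a, b⟩; simp only [Prod.mk.injEq]; omega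
  right_inv := by rintro ⟨x, y, z⟩; simp only [Prod.mk.injEq]; omega

theorem tsum_tsum_mul_mul_sub (F G H : ℤ → ℝ≥0∞) :
    ∑' (n : ℤ) (q : ℤ × ℤ), F (n - q.1) * G (n - q.1 - q.2) * H (n - q.2)
      = (∑' x, F x) * (∑' y, G y) * ∑' z, H z := by
  let g : ℤ × ℤ × ℤ → ℝ≥0∞ := fun s => F s.1 * G s.2.1 * H s.2.2
  calc ∑' (n : ℤ) (q : ℤ × ℤ), F (n - q.1) * G (n - q.1 - q.2) * H (n - q.2)
      = ∑' r, g (convCoordEquiv r) := ENNReal.tsum_prod.symm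
    _ = ∑' s, g s := convCoordEquiv.tsum_eq g
    _ = (∑' x, F x) * (∑' y, G y) * ∑' z, H z := by
      simp only [g, ENNReal.tsum_prod', ENNReal.tsum_mul_left, ENNReal.tsum_mul_right, mul_assoc]

theorem tsum_triConv_sq_le (K : ℤ × ℤ → ℝ≥0∞) (F G H : ℤ → ℝ≥0∞) :
    ∑' n, triConv K F G H n ^ 2
      ≤ (∑' q, K q ^ 2) * ((∑' x, F x ^ 2) * (∑' y, G y ^ 2) * ∑' z, H z ^ 2) := by
  calc ∑' n, triConv K F G H n ^ 2
      ≤ ∑' n, (∑' q, K q ^ 2) *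
          ∑' q : ℤ × ℤ, (F (n - q.1) * G (n - q.1 - q.2) * H (n - q.2)) ^ 2 :=
        ENNReal.tsum_le_tsum fun n => ENNReal.tsum_mul_sq_le _ _
    _ = (∑' q, K q ^ 2) * ((∑' x, F x ^ 2) * (∑' y, G y ^ 2) * ∑' z, H z ^ 2) := by
      simp only [ENNReal.tsum_mul_left, mul_pow]
      rw [tsum_tsum_mul_mul_sub (F · ^ 2) (G · ^ 2) (H · ^ 2)]

theorem triConv_ne_top {K : ℤ × ℤ → ℝ≥0∞} {F G H : ℤ → ℝ≥0∞} (hK : ∑' q, K q ^ 2 ≠ ⊤)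
    (hF : ∑' x, F x ^ 2 ≠ ⊤) (hG : ∑' y, G y ^ 2 ≠ ⊤) (hH : ∑' z, H z ^ 2 ≠ ⊤) (n : ℤ) :
    triConv K F G H n ≠ ⊤ := by
  have hsq : triConv K F G H n ^ 2 ≠ ⊤ :=
    ne_top_of_le_ne_top (by finiteness) <| (ENNReal.le_tsum n).trans (tsum_triConv_sq_le K F G H)
  simpa using hsq

end TrilinearConvolution

section PhaseWeight

noncomputable def phaseWeight (N : ℝ) (q : ℤ × ℤ) : ℝ≥0∞ :=
  if N < |((2 * q.1 * q.2 : ℤ) : ℝ)| then ENNReal.ofReal |((2 * q.1 * q.2 : ℤ) : ℝ)|⁻¹ else 0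

theorem inv_sq_le_rpow_mul_rpow {N s : ℝ} (hN : 0 < N) (hs₀ : 0 ≤ s) (hs₂ : s ≤ 2) {a b : ℤ}
    (h : N < |((2 * a * b : ℤ) : ℝ)|) :
    (|((2 * a * b : ℤ) : ℝ)|⁻¹) ^ 2 ≤ N ^ (s - 2) * (|(a : ℝ)| ^ (-s) * |(b : ℝ)| ^ (-s)) := by
  set x := |((2 * a * b : ℤ) : ℝ)|
  have hx : x = 2 * (|(a : ℝ)| * |(b : ℝ)|) := by
    simp only [x, Int.cast_mul, Int.cast_ofNat, abs_mul, abs_two, mul_assoc]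
  have hx₀ : 0 < x := hN.trans h
  have hab : 0 < |(a : ℝ)| * |(b : ℝ)| := by linarith
  calc (x⁻¹) ^ 2 = x ^ (s - 2) * x ^ (-s) := by
        rw [← Real.rpow_add hx₀, show s - 2 + -s = -(2 : ℕ) by push_cast; ring,
          Real.rpow_neg hx₀.le, Real.rpow_natCast, inv_pow]
    _ ≤ N ^ (s - 2) * (|(a : ℝ)| * |(b : ℝ)|) ^ (-s) := by
        gcongr ?_ * ?_
        · exact Real.rpow_le_rpow_of_nonpos hN h.le (by linarith)
        · exact Real.rpow_le_rpow_of_nonpos hab (by linarith) (by linarith)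
    _ = N ^ (s - 2) * (|(a : ℝ)| ^ (-s) * |(b : ℝ)| ^ (-s)) := by
        rw [Real.mul_rpow (abs_nonneg _) (abs_nonneg _)]

theorem tsum_phaseWeight_sq_le {N s : ℝ} (hN : 0 < N) (hs₀ : 0 ≤ s) (hs₂ : s ≤ 2) :
    ∑' q, phaseWeight N q ^ 2
      ≤ ENNReal.ofReal (N ^ (s - 2)) * (∑' a : ℤ, ENNReal.ofReal (|(a : ℝ)| ^ (-s))) ^ 2 := by
  calc ∑' q, phaseWeight N q ^ 2
      ≤ ∑' q : ℤ × ℤ, ENNReal.ofReal (N ^ (s - 2)) *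
          (ENNReal.ofReal (|(q.1 : ℝ)| ^ (-s)) * ENNReal.ofReal (|(q.2 : ℝ)| ^ (-s))) := by
        refine ENNReal.tsum_le_tsum fun q => ?_
        unfold phaseWeight
        split_ifs with h
        · rw [← ENNReal.ofReal_pow (by positivity), ← ENNReal.ofReal_mul (by positivity),
            ← ENNReal.ofReal_mul (by positivity)]
          exact ENNReal.ofReal_le_ofReal (inv_sq_le_rpow_mul_rpow hN hs₀ hs₂ h)
        · simp
    _ = ENNReal.ofReal (N ^ (s - 2)) * (∑' a : ℤ, ENNReal.ofReal (|(a : ℝ)| ^ (-s))) ^ 2 := by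
        rw [ENNReal.tsum_mul_left, ENNReal.tsum_prod (f := fun a b : ℤ =>
          ENNReal.ofReal (|(a : ℝ)| ^ (-s)) * ENNReal.ofReal (|(b : ℝ)| ^ (-s)))]
        simp only [ENNReal.tsum_mul_left, ENNReal.tsum_mul_right, sq]

theorem exists_tsum_phaseWeight_sq_le {ε : ℝ} (hε : 0 < ε) :
    ∃ C > (0 : ℝ), ∀ N : ℝ, 1 ≤ N →
      ∑' q, phaseWeight N q ^ 2 ≤ ENNReal.ofReal ((C * N ^ (-(1 : ℝ) / 2 + ε)) ^ 2) := by
  set s := 1 + min ε 1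
  have hs : 1 < s := by have := lt_min hε one_pos; linarith
  have hsum : Summable fun a : ℤ => |(a : ℝ)| ^ (-s) := Real.summable_abs_int_rpow hs
  have hnonneg (a : ℤ) : 0 ≤ |(a : ℝ)| ^ (-s) := by positivity
  refine ⟨∑' a : ℤ, |(a : ℝ)| ^ (-s), hsum.tsum_pos hnonneg 1 (by simp), fun N hN => ?_⟩
  have hN₀ : 0 < N := one_pos.trans_le hN
  have hpow : N ^ (s - 2) ≤ (N ^ (-(1 : ℝ) / 2 + ε)) ^ 2 := by
    rw [← Real.rpow_natCast, ← Real.rpow_mul hN₀.le]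
    exact Real.rpow_le_rpow_of_exponent_le hN (by have := min_le_left ε 1; push_cast; linarith)
  calc ∑' q, phaseWeight N q ^ 2
      ≤ ENNReal.ofReal (N ^ (s - 2)) * (∑' a : ℤ, ENNReal.ofReal (|(a : ℝ)| ^ (-s))) ^ 2 :=
        tsum_phaseWeight_sq_le hN₀ (by linarith) (by have := min_le_right ε 1; linarith)
    _ = ENNReal.ofReal (N ^ (s - 2) * (∑' a : ℤ, |(a : ℝ)| ^ (-s)) ^ 2) := by
        rw [← ENNReal.ofReal_tsum_of_nonneg hnonneg hsum,
          ← ENNReal.ofReal_pow (tsum_nonneg hnonneg), ← ENNReal.ofReal_mul (by positivity)]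
    _ ≤ ENNReal.ofReal (((∑' a : ℤ, |(a : ℝ)| ^ (-s)) * N ^ (-(1 : ℝ) / 2 + ε)) ^ 2) := by
        gcongr
        rw [mul_pow, mul_comm]
        gcongr

end PhaseWeight

section BoundaryTerm

theorem enorm_mul_conj_mul_sub_le {𝕜 : Type*} [RCLike 𝕜] (x₁ x₂ x₃ y₁ y₂ y₃ : 𝕜) :
    ‖x₁ * conj x₂ * x₃ - y₁ * conj y₂ * y₃‖ₑ ≤
      ‖x₁ - y₁‖ₑ * ‖x₂‖ₑ * ‖x₃‖ₑ + ‖y₁‖ₑ * ‖x₂ - y₂‖ₑ * ‖x₃‖ₑ + ‖y₁‖ₑ * ‖y₂‖ₑ * ‖x₃ - y₃‖ₑ := by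
  have h : x₁ * conj x₂ * x₃ - y₁ * conj y₂ * y₃ = (x₁ - y₁) * conj x₂ * x₃
      + y₁ * conj (x₂ - y₂) * x₃ + y₁ * conj y₂ * (x₃ - y₃) := by
    simp only [map_sub]; ring
  rw [h]
  refine (enorm_add_le _ _).trans (add_le_add (enorm_add_le _ _) le_rfl) |>.trans ?_
  simp only [enorm_mul, RCLike.enorm_conj, le_refl]

theorem tsum_largePhase_le (N : ℝ) (n : ℤ) (f : ℤ × ℤ × ℤ → ℝ≥0∞) :
    ∑' p : {p : ℤ × ℤ × ℤ // largePhase N n p}, f p.1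
      ≤ ∑' q : ℤ × ℤ, f (n - q.1, n - q.1 - q.2, n - q.2) := by
  have hinj : Function.Injective
      fun p : {p : ℤ × ℤ × ℤ // largePhase N n p} => (n - p.1.1, n - p.1.2.2) := by
    rintro ⟨⟨a₁, a₂, a₃⟩, ha⟩ ⟨⟨b₁, b₂, b₃⟩, hb⟩ h
    have ha' : n = a₁ - a₂ + a₃ := ha.1
    have hb' : n = b₁ - b₂ + b₃ := hb.1
    simp only [Prod.mk.injEq, Subtype.mk.injEq] at h ⊢
    omega
  refine le_of_eq_of_le (tsum_congr fun p => ?_)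
    (ENNReal.tsum_comp_le_tsum_of_injective hinj fun q => f (n - q.1, n - q.1 - q.2, n - q.2))
  obtain ⟨⟨p₁, p₂, p₃⟩, hp⟩ := p
  have hp' : n = p₁ - p₂ + p₃ := hp.1
  congr 1
  simp only [Prod.mk.injEq]
  omega

variable {N : ℝ} (t : ℝ)

theorem enorm_phaseFactor {n : ℤ} {p : ℤ × ℤ × ℤ} (hp : largePhase N n p) :
    ‖Complex.exp (-Complex.I * ((phase n p : ℤ) : ℂ) * (t : ℂ)) / ((phase n p : ℤ) : ℂ)‖ₑ
      = phaseWeight N (n - p.1, n - p.2.2) := by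
  rw [phaseWeight, if_pos (by exact hp.2.2.2), ← ofReal_norm, norm_div, Complex.norm_exp,
    Complex.norm_intCast]
  simp [phase]

theorem enorm_term21 {n : ℤ} {p : ℤ × ℤ × ℤ} (u : ℤ → ℂ) (hp : largePhase N n p) :
    ‖term21 t u n p‖ₑ
      = phaseWeight N (n - p.1, n - p.2.2) * (‖u p.1‖ₑ * ‖u p.2.1‖ₑ * ‖u p.2.2‖ₑ) := by
  rw [term21, enorm_mul, enorm_mul, enorm_mul, enorm_phaseFactor t hp, RCLike.enorm_conj]
  ring

theorem enorm_term21_sub_le {n : ℤ} {p : ℤ × ℤ × ℤ} (v w : ℤ → ℂ) (hp : largePhase N n p) :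
    ‖term21 t v n p - term21 t w n p‖ₑ ≤ phaseWeight N (n - p.1, n - p.2.2) *
      (‖v p.1 - w p.1‖ₑ * ‖v p.2.1‖ₑ * ‖v p.2.2‖ₑ + ‖w p.1‖ₑ * ‖v p.2.1 - w p.2.1‖ₑ * ‖v p.2.2‖ₑ
        + ‖w p.1‖ₑ * ‖w p.2.1‖ₑ * ‖v p.2.2 - w p.2.2‖ₑ) := by
  have h : term21 t v n p - term21 t w n p =
      Complex.exp (-Complex.I * ((phase n p : ℤ) : ℂ) * (t : ℂ)) / ((phase n p : ℤ) : ℂ) *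
        (v p.1 * conj (v p.2.1) * v p.2.2 - w p.1 * conj (w p.2.1) * w p.2.2) := by
    simp only [term21]; ring
  rw [h, enorm_mul, enorm_phaseFactor t hp]
  gcongr
  exact enorm_mul_conj_mul_sub_le _ _ _ _ _ _

theorem tsum_enorm_term21_le (u : ℤ → ℂ) (n : ℤ) :
    ∑' p : {p : ℤ × ℤ × ℤ // largePhase N n p}, ‖term21 t u n p.1‖ₑ
      ≤ triConv (phaseWeight N) (‖u ·‖ₑ) (‖u ·‖ₑ) (‖u ·‖ₑ) n := by
  rw [tsum_congr fun p => enorm_term21 t u p.2]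
  refine (tsum_largePhase_le N n fun p =>
    phaseWeight N (n - p.1, n - p.2.2) * (‖u p.1‖ₑ * ‖u p.2.1‖ₑ * ‖u p.2.2‖ₑ)).trans_eq ?_
  simp only [triConv, sub_sub_cancel]

theorem tsum_enorm_term21_sub_le (v w : ℤ → ℂ) (n : ℤ) :
    ∑' p : {p : ℤ × ℤ × ℤ // largePhase N n p}, ‖term21 t v n p.1 - term21 t w n p.1‖ₑ
      ≤ triConv (phaseWeight N) (fun m => ‖v m - w m‖ₑ) (‖v ·‖ₑ) (‖v ·‖ₑ) n
        + triConv (phaseWeight N) (‖w ·‖ₑ) (fun m => ‖v m - w m‖ₑ) (‖v ·‖ₑ) n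
        + triConv (phaseWeight N) (‖w ·‖ₑ) (‖w ·‖ₑ) (fun m => ‖v m - w m‖ₑ) n := by
  refine (ENNReal.tsum_le_tsum fun p => enorm_term21_sub_le t v w p.2).trans
    ((tsum_largePhase_le N n fun p => phaseWeight N (n - p.1, n - p.2.2) *
      (‖v p.1 - w p.1‖ₑ * ‖v p.2.1‖ₑ * ‖v p.2.2‖ₑ + ‖w p.1‖ₑ * ‖v p.2.1 - w p.2.1‖ₑ * ‖v p.2.2‖ₑ
        + ‖w p.1‖ₑ * ‖w p.2.1‖ₑ * ‖v p.2.2 - w p.2.2‖ₑ)).trans_eq ?_)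
  simp only [triConv, sub_sub_cancel, mul_add, ENNReal.tsum_add]

theorem summable_term21 {u : ℤ → ℂ} (hS : ∑' q, phaseWeight N q ^ 2 ≠ ⊤)
    (hu : ∑' m, ‖u m‖ₑ ^ 2 ≠ ⊤) (n : ℤ) :
    Summable fun p : {p : ℤ × ℤ × ℤ // largePhase N n p} => term21 t u n p.1 :=
  .of_enorm <| ne_top_of_le_ne_top (triConv_ne_top hS hu hu hu n) (tsum_enorm_term21_le t u n)

theorem enorm_N21_sub_le {v w : ℤ → ℂ} (hS : ∑' q, phaseWeight N q ^ 2 ≠ ⊤)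
    (hv : ∑' m, ‖v m‖ₑ ^ 2 ≠ ⊤) (hw : ∑' m, ‖w m‖ₑ ^ 2 ≠ ⊤) (n : ℤ) :
    ‖N21 N t v n - N21 N t w n‖ₑ
      ≤ triConv (phaseWeight N) (fun m => ‖v m - w m‖ₑ) (‖v ·‖ₑ) (‖v ·‖ₑ) n
        + triConv (phaseWeight N) (‖w ·‖ₑ) (fun m => ‖v m - w m‖ₑ) (‖v ·‖ₑ) n
        + triConv (phaseWeight N) (‖w ·‖ₑ) (‖w ·‖ₑ) (fun m => ‖v m - w m‖ₑ) n := by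
  rw [N21, N21, ← (summable_term21 t hS hv n).tsum_sub (summable_term21 t hS hw n)]
  exact enorm_tsum_le_tsum_enorm.trans (tsum_enorm_term21_sub_le t v w n)

theorem tsum_enorm_N21_sub_sq_le {v w : ℤ → ℂ} (hS : ∑' q, phaseWeight N q ^ 2 ≠ ⊤)
    (hv : ∑' m, ‖v m‖ₑ ^ 2 ≠ ⊤) (hw : ∑' m, ‖w m‖ₑ ^ 2 ≠ ⊤) :
    ∑' n, ‖N21 N t v n - N21 N t w n‖ₑ ^ 2
      ≤ 3 * (∑' q, phaseWeight N q ^ 2) *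
        ((∑' m, ‖v m‖ₑ ^ 2 + ∑' m, ‖w m‖ₑ ^ 2) ^ 2 * ∑' m, ‖v m - w m‖ₑ ^ 2) := by
  set S := ∑' q, phaseWeight N q ^ 2
  set V := ∑' m, ‖v m‖ₑ ^ 2
  set W := ∑' m, ‖w m‖ₑ ^ 2
  set D := ∑' m, ‖v m - w m‖ₑ ^ 2
  calc ∑' n, ‖N21 N t v n - N21 N t w n‖ₑ ^ 2
      ≤ ∑' n, 3 * (triConv (phaseWeight N) (fun m => ‖v m - w m‖ₑ) (‖v ·‖ₑ) (‖v ·‖ₑ) n ^ 2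
          + triConv (phaseWeight N) (‖w ·‖ₑ) (fun m => ‖v m - w m‖ₑ) (‖v ·‖ₑ) n ^ 2
          + triConv (phaseWeight N) (‖w ·‖ₑ) (‖w ·‖ₑ) (fun m => ‖v m - w m‖ₑ) n ^ 2) :=
        ENNReal.tsum_le_tsum fun n =>
          (pow_le_pow_left₀ zero_le (enorm_N21_sub_le t hS hv hw n) 2).trans
            (ENNReal.add_add_sq_le _ _ _)
    _ ≤ 3 * (S * (D * V * V) + S * (W * D * V) + S * (W * W * D)) := by
        rw [ENNReal.tsum_mul_left, ENNReal.tsum_add, ENNReal.tsum_add]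
        gcongr <;> exact tsum_triConv_sq_le _ _ _ _
    _ = 3 * S * ((V ^ 2 + V * W + W ^ 2) * D) := by ring
    _ ≤ 3 * S * ((V + W) ^ 2 * D) := by
        gcongr
        rw [add_sq, mul_assoc, two_mul]
        gcongr
        exact le_add_self

end BoundaryTerm

section L2

theorem l2norm_nonneg (u : ℤ → ℂ) : 0 ≤ l2norm u := Real.sqrt_nonneg _

theorem memℓ2_iff_memℓp {u : ℤ → ℂ} : Memℓ2 u ↔ Memℓp u 2 := by
  rw [memℓp_gen_iff (by norm_num), Memℓ2]
  simp

theorem Memℓ2.sub {v w : ℤ → ℂ} (hv : Memℓ2 v) (hw : Memℓ2 w) : Memℓ2 fun n => v n - w n :=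
  memℓ2_iff_memℓp.2 ((memℓ2_iff_memℓp.1 hv).sub (memℓ2_iff_memℓp.1 hw))

theorem Memℓ2.tsum_enorm_sq {u : ℤ → ℂ} (hu : Memℓ2 u) :
    ∑' n, ‖u n‖ₑ ^ 2 = ENNReal.ofReal (l2norm u ^ 2) := by
  rw [l2norm, Real.sq_sqrt (tsum_nonneg fun n => sq_nonneg _),
    ENNReal.ofReal_tsum_of_nonneg (fun n => sq_nonneg _) hu]
  simp only [ENNReal.ofReal_pow (norm_nonneg _), ofReal_norm]

theorem memℓ2_and_l2norm_le_of_tsum_enorm_sq_le {u : ℤ → ℂ} {R : ℝ} (hR : 0 ≤ R)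
    (h : ∑' n, ‖u n‖ₑ ^ 2 ≤ ENNReal.ofReal (R ^ 2)) : Memℓ2 u ∧ l2norm u ≤ R := by
  have hu : Memℓ2 u := by
    have hfin : ∑' n, ‖(‖u n‖ ^ 2 : ℝ)‖ₑ ≠ ⊤ := by
      simpa only [enorm_pow, enorm_norm] using ne_top_of_le_ne_top ENNReal.ofReal_ne_top h
    simpa [Memℓ2] using tsum_enorm_ne_top_iff_summable_norm.1 hfin
  refine ⟨hu, ?_⟩
  rw [hu.tsum_enorm_sq, ENNReal.ofReal_le_ofReal_iff (sq_nonneg R)] at h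
  exact (pow_le_pow_iff_left₀ (l2norm_nonneg u) hR two_ne_zero).1 h

end L2

/-- **Lipschitz bound for the boundary term `N₂₁`.** For every `ε > 0` there is `C > 0` such
that for every `N ≥ 1`, `t ∈ ℝ`, and all `v, w ∈ ℓ²(ℤ;ℂ)`:
`‖N₂₁(v) − N₂₁(w)‖ ≤ C N^{−1/2+ε} (‖v‖² + ‖w‖²) ‖v − w‖` in `ℓ²(ℤ;ℂ)`. -/
theorem N21_diff_bound : ∀ ε > (0:ℝ), ∃ C > (0:ℝ), ∀ N : ℝ, 1 ≤ N → ∀ t : ℝ,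
    ∀ v w : ℤ → ℂ, Memℓ2 v → Memℓ2 w →
    Memℓ2 (fun n => N21 N t v n - N21 N t w n) ∧
    l2norm (fun n => N21 N t v n - N21 N t w n)
      ≤ C * N ^ (-(1:ℝ)/2 + ε) * (l2norm v ^ 2 + l2norm w ^ 2) *
        l2norm (fun n => v n - w n) := by
  intro ε hε
  obtain ⟨C, hC, hS⟩ := exists_tsum_phaseWeight_sq_le hε
  refine ⟨√3 * C, by positivity, fun N hN t v w hv hw => ?_⟩
  apply memℓ2_and_l2norm_le_of_tsum_enorm_sq_le
    (mul_nonneg (by positivity) (l2norm_nonneg _))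
  calc ∑' n, ‖N21 N t v n - N21 N t w n‖ₑ ^ 2
      ≤ 3 * (∑' q, phaseWeight N q ^ 2) *
          ((∑' m, ‖v m‖ₑ ^ 2 + ∑' m, ‖w m‖ₑ ^ 2) ^ 2 * ∑' m, ‖v m - w m‖ₑ ^ 2) :=
        tsum_enorm_N21_sub_sq_le t (ne_top_of_le_ne_top ENNReal.ofReal_ne_top (hS N hN))
          (hv.tsum_enorm_sq ▸ ENNReal.ofReal_ne_top) (hw.tsum_enorm_sq ▸ ENNReal.ofReal_ne_top)
    _ ≤ ENNReal.ofReal 3 * ENNReal.ofReal ((C * N ^ (-(1:ℝ)/2 + ε)) ^ 2) *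
          ((ENNReal.ofReal (l2norm v ^ 2) + ENNReal.ofReal (l2norm w ^ 2)) ^ 2 *
            ENNReal.ofReal (l2norm (fun n => v n - w n) ^ 2)) := by
        rw [hv.tsum_enorm_sq, hw.tsum_enorm_sq, (hv.sub hw).tsum_enorm_sq, ENNReal.ofReal_ofNat]
        gcongr
        exact hS N hN
    _ = ENNReal.ofReal ((√3 * C * N ^ (-(1:ℝ)/2 + ε) * (l2norm v ^ 2 + l2norm w ^ 2) *
          l2norm (fun n => v n - w n)) ^ 2) := by
        rw [← ENNReal.ofReal_add (by positivity) (by positivity),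
          ← ENNReal.ofReal_pow (by positivity), ← ENNReal.ofReal_mul (by positivity),
          ← ENNReal.ofReal_mul (by positivity), ← ENNReal.ofReal_mul (by positivity)]
        congr 1
        simp only [mul_pow, Real.sq_sqrt zero_le_three]
        ring
end

section
/- For every ε > 0 there exists C > 0 such that for every real N ≥ 1 and every v ∈ ℓ²(ℤ; ℂ): define, for n ∈ ℤ, Q(n) := ∑ over all (n₁, n₂, n₃, m₁, m₂, m₃) ∈ ℤ⁶ satisfying n = n₁ − n₂ + n₃ with n₂ ∉ {n₁, n₃}, n₁ = m₁ − m₂ + m₃ with m₂ ∉ {m₁, m₃}, |μ₁| > N, and |μ₁ + μ₂| ≤ 125 · |μ₁|^{1 − 1/100}, of (1/|μ₁|) · |v_{m₁}| |v_{m₂}| |v_{m₃}| |v_{n₂}| |v_{n₃}|, where μ₁ := 2(n − n₁)(n − n₃) and μ₂ := 2(n₁ − m₁)(n₁ − m₃). Then Q (a sum of nonnegative terms) is finite for every n, belongs to ℓ²(ℤ), and ‖Q‖ ≤ C N^{−1/200 + ε} ‖v‖⁵. -/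
open scoped BigOperators

/-- First-generation phase `μ₁ = 2(n − n₁)(n − n₃)`, where `q.1 = (n₁, n₂, n₃)`. -/
def mu1 (n : ℤ) (q : (ℤ × ℤ × ℤ) × (ℤ × ℤ × ℤ)) : ℤ :=
  2 * (n - q.1.1) * (n - q.1.2.2)

/-- Second-generation phase `μ₂ = 2(n₁ − m₁)(n₁ − m₃)`, where `q.2 = (m₁, m₂, m₃)`. -/
def mu2 (q : (ℤ × ℤ × ℤ) × (ℤ × ℤ × ℤ)) : ℤ :=
  2 * (q.1.1 - q.2.1) * (q.1.1 - q.2.2.2)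

/-- Two-generation frequencies in the nearly resonant region
`|μ₁ + μ₂| ≤ 125 |μ₁|^{1 − 1/100}` with `|μ₁| > N`. -/
def cond9 (N : ℝ) (n : ℤ) (q : (ℤ × ℤ × ℤ) × (ℤ × ℤ × ℤ)) : Prop :=
  n = q.1.1 - q.1.2.1 + q.1.2.2 ∧ q.1.2.1 ≠ q.1.1 ∧ q.1.2.1 ≠ q.1.2.2 ∧
  q.1.1 = q.2.1 - q.2.2.1 + q.2.2.2 ∧ q.2.2.1 ≠ q.2.1 ∧ q.2.2.1 ≠ q.2.2.2 ∧
  N < |((mu1 n q : ℤ) : ℝ)| ∧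
  |((mu1 n q + mu2 q : ℤ) : ℝ)| ≤ 125 * |((mu1 n q : ℤ) : ℝ)| ^ ((1:ℝ) - 1/100)

/-- The summand `(1/|μ₁|) |v_{m₁}| |v_{m₂}| |v_{m₃}| |v_{n₂}| |v_{n₃}|`. -/
noncomputable def term9 (v : ℤ → ℂ) (n : ℤ) (q : (ℤ × ℤ × ℤ) × (ℤ × ℤ × ℤ)) : ℝ :=
  1 / |((mu1 n q : ℤ) : ℝ)| *
    (‖v q.2.1‖ * ‖v q.2.2.1‖ * ‖v q.2.2.2‖ * ‖v q.1.2.1‖ * ‖v q.1.2.2‖)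

/-- The majorant `Q(n)` of the nearly resonant quintic term `N⁽²⁾₁` of the second generation. -/
noncomputable def Q9 (N : ℝ) (v : ℤ → ℂ) (n : ℤ) : ℝ :=
  ∑' q : {q : (ℤ × ℤ × ℤ) × (ℤ × ℤ × ℤ) // cond9 N n q}, term9 v n q.1

/-!
By Cauchy–Schwarz over the frequencies, `Q(n)² ≤ A(n) B(n)` with
`A(n) = ∑ |μ₁|⁻¹ |v_{n₂}|² |v_{n₃}|²` and `B(n) = ∑ |μ₁|⁻¹ |v_{m₁}|² |v_{m₂}|² |v_{m₃}|²`, both over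
the nearly resonant set, so `‖Q‖² ≤ (sup_n A(n)) · ∑_n B(n)`.

Both factors come down to a divisor-type count: pairs of nonzero integers `(α, β)` with `|αβ| ≤ K`
and `αβ` in a window of length `L` number `O(L log K + √K)`, because the smaller factor is at most
`√K`. In `A(n)`, fixing `(n₂, n₃)` fixes `μ₁`, and `μ₂ = 2αβ` with `(α, β) = (n₁ - m₁, n₁ - m₃)`
lies in a window of length `O(|μ₁|^{99/100})` around `-μ₁`; this leaves `O(|μ₁|^{199/200})` choices,
so `A(n) = O(N^{-1/200} ‖v‖⁴)`. In `∑_n B(n)`, fixing `(m₁, m₂, m₃)` fixes `μ₂`, and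
`μ₁ = 2αβ` with `(α, β) = (n - n₁, n - n₃)`; near resonance forces `|μ₁| ≍ |μ₂|` (or `μ₁` bounded),
and the same count gives `∑_n B(n) = O(N^{-1/200} ‖v‖⁶)`.
-/

open scoped ENNReal
open Set

namespace ENNReal

variable {ι κ : Type*}

theorem two_mul_le_add_sq (a b : ℝ≥0∞) : 2 * a * b ≤ a ^ 2 + b ^ 2 := by
  rcases eq_top_or_lt_top a with rfl | ha
  · simp
  rcases eq_top_or_lt_top b with rfl | hb
  · simp
  lift a to NNReal using ha.ne
  lift b to NNReal using hb.ne
  exact_mod_cast _root_.two_mul_le_add_sq a b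

theorem tsum_prod_mul_eq_mul_tsum (f : ι → ℝ≥0∞) (g : κ → ℝ≥0∞) :
    ∑' x : ι × κ, f x.1 * g x.2 = (∑' i, f i) * ∑' j, g j := by
  rw [ENNReal.tsum_prod (f := fun i j => f i * g j)]
  simp_rw [ENNReal.tsum_mul_left, ENNReal.tsum_mul_right]

theorem sq_tsum_mul_mul_le (w f g : ι → ℝ≥0∞) :
    (∑' i, w i * (f i * g i)) ^ 2 ≤ (∑' i, w i * f i ^ 2) * ∑' i, w i * g i ^ 2 := by
  have amgm : ∀ i j, 2 * (w i * (f i * g i) * (w j * (f j * g j))) ≤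
      w i * f i ^ 2 * (w j * g j ^ 2) + w j * f j ^ 2 * (w i * g i ^ 2) := fun i j => by
    calc 2 * (w i * (f i * g i) * (w j * (f j * g j)))
        = w i * w j * (2 * (f i * g j) * (f j * g i)) := by ring
      _ ≤ w i * w j * ((f i * g j) ^ 2 + (f j * g i) ^ 2) := by gcongr; exact two_mul_le_add_sq _ _
      _ = _ := by ring
  rw [← ENNReal.mul_le_mul_iff_right two_ne_zero ofNat_ne_top]
  calc 2 * (∑' i, w i * (f i * g i)) ^ 2
      = ∑' i, ∑' j, 2 * (w i * (f i * g i) * (w j * (f j * g j))) := by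
        simp_rw [sq, ENNReal.tsum_mul_left, ← ENNReal.tsum_mul_right]
    _ ≤ ∑' i, ∑' j, (w i * f i ^ 2 * (w j * g j ^ 2) + w j * f j ^ 2 * (w i * g i ^ 2)) :=
        ENNReal.tsum_le_tsum fun i => ENNReal.tsum_le_tsum fun j => amgm i j
    _ = 2 * ((∑' i, w i * f i ^ 2) * ∑' i, w i * g i ^ 2) := by
        simp_rw [ENNReal.tsum_add, ENNReal.tsum_mul_left, ENNReal.tsum_mul_right]
        rw [ENNReal.tsum_mul_left]
        ring

theorem tsum_sq_tsum_mul_mul_le (w f g : ι → κ → ℝ≥0∞) {A B : ℝ≥0∞}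
    (hA : ∀ i, ∑' j, w i j * f i j ^ 2 ≤ A) (hB : ∑' i, ∑' j, w i j * g i j ^ 2 ≤ B) :
    ∑' i, (∑' j, w i j * (f i j * g i j)) ^ 2 ≤ A * B :=
  calc ∑' i, (∑' j, w i j * (f i j * g i j)) ^ 2
      ≤ ∑' i, A * ∑' j, w i j * g i j ^ 2 :=
        ENNReal.tsum_le_tsum fun i => (sq_tsum_mul_mul_le _ _ _).trans (by gcongr; exact hA i)
    _ ≤ A * B := by rw [ENNReal.tsum_mul_left]; gcongr

end ENNReal

theorem summable_of_tsum_ofReal_ne_top {ι : Type*} {f : ι → ℝ} (hf : ∀ i, 0 ≤ f i)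
    (h : ∑' i, ENNReal.ofReal (f i) ≠ ⊤) :
    Summable f ∧ ENNReal.ofReal (∑' i, f i) = ∑' i, ENNReal.ofReal (f i) := by
  have hsum : Summable f :=
    (ENNReal.summable_toReal h).congr fun i => ENNReal.toReal_ofReal (hf i)
  exact ⟨hsum, ENNReal.ofReal_tsum_of_nonneg hf hsum⟩

theorem tsum_sq_tsum_le_of_tsum_sq_tsum_ofReal_le {ι : Type*} {κ : ι → Type*}
    {f : (i : ι) → κ i → ℝ} (hf : ∀ i j, 0 ≤ f i j) {B : ℝ} (hB : 0 ≤ B)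
    (h : ∑' i, (∑' j, ENNReal.ofReal (f i j)) ^ 2 ≤ ENNReal.ofReal B) :
    (∀ i, Summable (f i)) ∧ Summable (fun i => (∑' j, f i j) ^ 2) ∧
      ∑' i, (∑' j, f i j) ^ 2 ≤ B := by
  have hfinite : ∀ i, ∑' j, ENNReal.ofReal (f i j) ≠ ⊤ := fun i htop => by
    have := (ENNReal.le_tsum i).trans h
    rw [htop, ENNReal.top_pow two_ne_zero, top_le_iff] at this
    exact ENNReal.ofReal_ne_top this
  have hrow := fun i => summable_of_tsum_ofReal_ne_top (hf i) (hfinite i)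
  have hsq : ∑' i, ENNReal.ofReal ((∑' j, f i j) ^ 2) ≤ ENNReal.ofReal B := by
    simpa only [ENNReal.ofReal_pow (tsum_nonneg (hf _)), (hrow _).2] using h
  obtain ⟨hsummable, hsum⟩ := summable_of_tsum_ofReal_ne_top (fun i => sq_nonneg _)
    (ne_top_of_le_ne_top ENNReal.ofReal_ne_top hsq)
  exact ⟨fun i => (hrow i).1, hsummable, (ENNReal.ofReal_le_ofReal_iff hB).1 (hsum.trans_le hsq)⟩

theorem encard_setOf_intCast_mem_Icc_le (u w : ℝ) :
    ({β : ℤ | (β : ℝ) ∈ Icc u w}.encard : ℝ≥0∞) ≤ ENNReal.ofReal (w - u + 1) := by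
  have hset : {β : ℤ | (β : ℝ) ∈ Icc u w} = ↑(Finset.Icc ⌈u⌉ ⌊w⌋) := by
    ext β; simp [Int.ceil_le, Int.le_floor]
  rw [hset, encard_coe_eq_coe_finsetCard, Int.card_Icc, ENat.toENNReal_coe]
  rcases le_or_gt (⌊w⌋ + 1 - ⌈u⌉) 0 with hle | hpos
  · simp [Int.toNat_eq_zero.mpr hle]
  rw [← ENNReal.ofReal_natCast]
  refine ENNReal.ofReal_le_ofReal ?_
  have hcast : ((⌊w⌋ + 1 - ⌈u⌉).toNat : ℝ) = ⌊w⌋ + 1 - ⌈u⌉ := by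
    exact_mod_cast Int.toNat_of_nonneg hpos.le
  rw [hcast]
  linarith [Int.floor_le w, Int.le_ceil u]

theorem encard_setOf_mul_intCast_mem_Icc_le {a : ℝ} (ha : a ≠ 0) (x y : ℝ) :
    ({β : ℤ | a * β ∈ Icc x y}.encard : ℝ≥0∞) ≤ ENNReal.ofReal ((y - x) / |a| + 1) := by
  rcases ha.lt_or_gt with hneg | hpos
  · calc ({β : ℤ | a * β ∈ Icc x y}.encard : ℝ≥0∞)
        ≤ {β : ℤ | (β : ℝ) ∈ Icc (y / a) (x / a)}.encard := by
          gcongr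
          exact fun ⟨h1, h2⟩ =>
            ⟨by rw [div_le_iff_of_neg hneg]; linarith, by rw [le_div_iff_of_neg hneg]; linarith⟩
      _ ≤ ENNReal.ofReal ((y - x) / |a| + 1) := by
          refine (encard_setOf_intCast_mem_Icc_le _ _).trans (le_of_eq ?_)
          rw [abs_of_neg hneg]; congr 1; field_simp; ring
  · calc ({β : ℤ | a * β ∈ Icc x y}.encard : ℝ≥0∞)
        ≤ {β : ℤ | (β : ℝ) ∈ Icc (x / a) (y / a)}.encard := by
          gcongr
          exact fun ⟨h1, h2⟩ =>
            ⟨by rw [div_le_iff₀ hpos]; linarith, by rw [le_div_iff₀ hpos]; linarith⟩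
      _ ≤ ENNReal.ofReal ((y - x) / |a| + 1) := by
          refine (encard_setOf_intCast_mem_Icc_le _ _).trans (le_of_eq ?_)
          rw [abs_of_pos hpos]; congr 1; field_simp

theorem sum_Icc_floor_div_add_one_le {L R : ℝ} (hL : 0 ≤ L) (hR : 1 ≤ R) :
    ∑ j ∈ Finset.Icc 1 ⌊R⌋₊, (L / j + 1) ≤ L * (1 + Real.log R) + R := by
  have hharm : ∑ j ∈ Finset.Icc 1 ⌊R⌋₊, (1 / j : ℝ) ≤ 1 + Real.log R := by
    calc ∑ j ∈ Finset.Icc 1 ⌊R⌋₊, (1 / j : ℝ) = harmonic ⌊R⌋₊ := by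
          simp [harmonic_eq_sum_Icc]
      _ ≤ 1 + Real.log ⌊R⌋₊ := harmonic_le_one_add_log _
      _ ≤ 1 + Real.log R := by
          gcongr
          · exact_mod_cast Nat.floor_pos.2 hR
          · exact Nat.floor_le (by linarith)
  calc ∑ j ∈ Finset.Icc 1 ⌊R⌋₊, (L / j + 1)
      = L * ∑ j ∈ Finset.Icc 1 ⌊R⌋₊, (1 / j : ℝ) + ⌊R⌋₊ := by
        simp [Finset.sum_add_distrib, Finset.mul_sum, div_eq_mul_inv]
    _ ≤ L * (1 + Real.log R) + R := by
        gcongr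
        exact Nat.floor_le (by linarith)

theorem encard_setOf_pos_mul_mem_Icc_le {x y R : ℝ} (hxy : x ≤ y) (hR : 1 ≤ R) :
    ({p : ℤ × ℤ | 1 ≤ p.1 ∧ (p.1 : ℝ) ≤ R ∧ (p.1 : ℝ) * p.2 ∈ Icc x y}.encard : ℝ≥0∞) ≤
      ENNReal.ofReal ((y - x) * (1 + Real.log R) + R) := by
  have hcover : {p : ℤ × ℤ | 1 ≤ p.1 ∧ (p.1 : ℝ) ≤ R ∧ (p.1 : ℝ) * p.2 ∈ Icc x y} ⊆
      ⋃ j ∈ Finset.Icc 1 ⌊R⌋₊, (fun β : ℤ => ((j : ℤ), β)) '' {β : ℤ | (j : ℝ) * β ∈ Icc x y} := by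
    rintro ⟨α, β⟩ ⟨hα, hαR, hαβ⟩
    lift α to ℕ using by omega
    simp only [mem_iUnion, mem_image, Finset.mem_Icc]
    exact ⟨α, ⟨by omega, Nat.le_floor (by exact_mod_cast hαR)⟩, β, by exact_mod_cast hαβ, rfl⟩
  have hcount : {p : ℤ × ℤ | 1 ≤ p.1 ∧ (p.1 : ℝ) ≤ R ∧ (p.1 : ℝ) * p.2 ∈ Icc x y}.encard ≤
      ∑ j ∈ Finset.Icc 1 ⌊R⌋₊, {β : ℤ | (j : ℝ) * β ∈ Icc x y}.encard :=
    (encard_le_encard hcover).trans <| (Finset.set_encard_biUnion_le _ _).trans <|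
      Finset.sum_le_sum fun j _ => encard_image_le _ _
  calc ({p : ℤ × ℤ | 1 ≤ p.1 ∧ (p.1 : ℝ) ≤ R ∧ (p.1 : ℝ) * p.2 ∈ Icc x y}.encard : ℝ≥0∞)
      ≤ ∑ j ∈ Finset.Icc 1 ⌊R⌋₊, ({β : ℤ | (j : ℝ) * β ∈ Icc x y}.encard : ℝ≥0∞) :=
        (ENat.toENNReal_le.2 hcount).trans_eq (map_sum ENat.toENNRealRingHom _ _)
    _ ≤ ∑ j ∈ Finset.Icc 1 ⌊R⌋₊, ENNReal.ofReal ((y - x) / j + 1) := by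
        gcongr with j hj
        have hj0 : (j : ℝ) ≠ 0 := Nat.cast_ne_zero.2 (by simp at hj; omega)
        simpa [abs_of_nonneg] using encard_setOf_mul_intCast_mem_Icc_le hj0 x y
    _ = ENNReal.ofReal (∑ j ∈ Finset.Icc 1 ⌊R⌋₊, ((y - x) / j + 1)) := by
        rw [ENNReal.ofReal_sum_of_nonneg fun j _ => by have := sub_nonneg.2 hxy; positivity]
    _ ≤ ENNReal.ofReal ((y - x) * (1 + Real.log R) + R) :=
        ENNReal.ofReal_le_ofReal (sum_Icc_floor_div_add_one_le (sub_nonneg.2 hxy) hR)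

theorem encard_setOf_mul_mem_Icc_le {x y K : ℝ} (hxy : x ≤ y) (hK : 1 ≤ K) :
    ({p : ℤ × ℤ | p.1 ≠ 0 ∧ p.2 ≠ 0 ∧ |(p.1 : ℝ) * p.2| ≤ K ∧ (p.1 : ℝ) * p.2 ∈ Icc x y}.encard
      : ℝ≥0∞) ≤ ENNReal.ofReal (4 * ((y - x) * (1 + Real.log K) + √K)) := by
  set H := {p : ℤ × ℤ | 1 ≤ p.1 ∧ (p.1 : ℝ) ≤ √K ∧ (p.1 : ℝ) * p.2 ∈ Icc x y}
  -- the smaller factor is at most `√K`; a sign change and/or a swap makes it the positive first one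
  have hcover : {p : ℤ × ℤ | p.1 ≠ 0 ∧ p.2 ≠ 0 ∧ |(p.1 : ℝ) * p.2| ≤ K ∧
      (p.1 : ℝ) * p.2 ∈ Icc x y} ⊆
      H ∪ Neg.neg ⁻¹' H ∪ Prod.swap ⁻¹' H ∪ (Neg.neg ∘ Prod.swap) ⁻¹' H := by
    rintro ⟨α, β⟩ ⟨hα, hβ, hαβK, hαβ⟩
    have hsmall : |(α : ℝ)| ≤ √K ∨ |(β : ℝ)| ≤ √K := by
      by_contra! h
      have := mul_lt_mul'' h.1 h.2 (Real.sqrt_nonneg _) (Real.sqrt_nonneg _)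
      rw [← abs_mul, Real.mul_self_sqrt (by linarith)] at this
      linarith
    simp only [H, mem_union, mem_preimage, mem_ofPred_eq, Prod.fst_neg, Prod.snd_neg,
      Function.comp_apply, Prod.fst_swap, Prod.snd_swap, Int.cast_neg, neg_mul_neg]
    rw [mul_comm (β : ℝ)]
    rcases hsmall with h | h <;> obtain ⟨hlo, hhi⟩ := abs_le.1 h
    · rcases hα.lt_or_gt with hneg | hpos
      · exact Or.inl (Or.inl (Or.inr ⟨by omega, by linarith, hαβ⟩))
      · exact Or.inl (Or.inl (Or.inl ⟨by omega, by exact_mod_cast hhi, hαβ⟩))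
    · rcases hβ.lt_or_gt with hneg | hpos
      · exact Or.inr ⟨by omega, by linarith, hαβ⟩
      · exact Or.inl (Or.inr ⟨by omega, by exact_mod_cast hhi, hαβ⟩)
  have hH : (H.encard : ℝ≥0∞) ≤ ENNReal.ofReal ((y - x) * (1 + Real.log K) + √K) := by
    refine (encard_setOf_pos_mul_mem_Icc_le hxy (Real.one_le_sqrt.2 hK)).trans ?_
    gcongr
    exact (Real.sqrt_le_left (by linarith)).2 (by nlinarith)
  have hunion := (encard_le_encard hcover).trans <| (encard_union_le _ _).trans <|
    add_le_add ((encard_union_le _ _).trans (add_le_add (encard_union_le _ _) le_rfl)) le_rfl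
  rw [encard_preimage_of_bijective neg_bijective, encard_preimage_of_bijective Prod.swap_bijective,
    encard_preimage_of_bijective (neg_bijective.comp Prod.swap_bijective)] at hunion
  calc _ ≤ ((H.encard + H.encard + H.encard + H.encard : ℕ∞) : ℝ≥0∞) := ENat.toENNReal_le.2 hunion
    _ = 4 * (H.encard : ℝ≥0∞) := by push_cast; ring
    _ ≤ _ := by rw [ENNReal.ofReal_mul (by norm_num)]; gcongr; simp

theorem mul_one_add_log_add_sqrt_le {K L c : ℝ} (hK : 1 ≤ K) (hL : 0 ≤ L)
    (hLK : L ≤ c * K ^ (99 / 100 : ℝ)) :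
    L * (1 + Real.log K) + √K ≤ (201 * c + 1) * K ^ (199 / 200 : ℝ) := by
  have hK0 : 0 < K := by linarith
  have hlog : 1 + Real.log K ≤ 201 * K ^ (1 / 200 : ℝ) := by
    have h1 := Real.log_le_rpow_div hK0.le (by norm_num : (0 : ℝ) < 1 / 200)
    have h2 := Real.one_le_rpow hK (by norm_num : (0 : ℝ) ≤ 1 / 200)
    linarith
  have hsqrt : √K ≤ K ^ (199 / 200 : ℝ) := by
    rw [Real.sqrt_eq_rpow]
    exact Real.rpow_le_rpow_of_exponent_le hK (by norm_num)
  have hsplit : K ^ (99 / 100 : ℝ) * K ^ (1 / 200 : ℝ) = K ^ (199 / 200 : ℝ) := by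
    rw [← Real.rpow_add hK0]; norm_num
  calc L * (1 + Real.log K) + √K
      ≤ c * K ^ (99 / 100 : ℝ) * (201 * K ^ (1 / 200 : ℝ)) + K ^ (199 / 200 : ℝ) :=
        add_le_add ((mul_le_mul_of_nonneg_left hlog hL).trans
          (mul_le_mul_of_nonneg_right hLK (by positivity))) hsqrt
    _ = (201 * c + 1) * K ^ (199 / 200 : ℝ) := by rw [← hsplit]; ring

theorem encard_setOf_mul_mem_Icc_le_rpow {x y K c : ℝ} (hxy : x ≤ y) (hK : 1 ≤ K)
    (hyx : y - x ≤ c * K ^ (99 / 100 : ℝ)) :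
    ({p : ℤ × ℤ | p.1 ≠ 0 ∧ p.2 ≠ 0 ∧ |(p.1 : ℝ) * p.2| ≤ K ∧ (p.1 : ℝ) * p.2 ∈ Icc x y}.encard
      : ℝ≥0∞) ≤ ENNReal.ofReal (4 * (201 * c + 1) * K ^ (199 / 200 : ℝ)) :=
  (encard_setOf_mul_mem_Icc_le hxy hK).trans <| ENNReal.ofReal_le_ofReal <| by
    rw [mul_assoc]
    gcongr
    exact mul_one_add_log_add_sqrt_le hK (sub_nonneg.2 hxy) hyx

theorem rpow_mul_inv_le {N m K A : ℝ} (hN : 0 < N) (hNm : N ≤ m) (hA : 1 ≤ A) (hK : 0 ≤ K)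
    (hKm : K ≤ A * m) : K ^ (199 / 200 : ℝ) * m⁻¹ ≤ A * N ^ (-(1 : ℝ) / 200) := by
  have hm : 0 < m := hN.trans_le hNm
  calc K ^ (199 / 200 : ℝ) * m⁻¹ ≤ (A * m) ^ (199 / 200 : ℝ) * m⁻¹ := by gcongr
    _ = A ^ (199 / 200 : ℝ) * m ^ (-(1 : ℝ) / 200) := by
        rw [Real.mul_rpow (by linarith) hm.le, mul_assoc, ← Real.rpow_neg_one,
          ← Real.rpow_add hm]
        norm_num
    _ ≤ A * N ^ (-(1 : ℝ) / 200) :=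
        mul_le_mul (Real.rpow_le_self_of_one_le hA (by norm_num))
          (Real.rpow_le_rpow_of_nonpos hN hNm (by norm_num)) (by positivity) (by linarith)

def NearResonant (μ₁ μ₂ : ℝ) : Prop :=
  |μ₁ + μ₂| ≤ 125 * |μ₁| ^ ((1 : ℝ) - 1 / 100)

namespace NearResonant

variable {μ₁ μ₂ : ℝ}

theorem abs_add_le_rpow (h : NearResonant μ₁ μ₂) : |μ₁ + μ₂| ≤ 125 * |μ₁| ^ (99 / 100 : ℝ) := by
  rw [show (99 / 100 : ℝ) = 1 - 1 / 100 by norm_num]; exact h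

theorem abs_snd_le (h : NearResonant μ₁ μ₂) (h₁ : 1 ≤ |μ₁|) : |μ₂| ≤ 126 * |μ₁| := by
  have hpow : |μ₁| ^ (99 / 100 : ℝ) ≤ |μ₁| := Real.rpow_le_self_of_one_le h₁ (by norm_num)
  have htri := abs_sub (μ₁ + μ₂) μ₁
  rw [add_sub_cancel_left] at htri
  linarith [h.abs_add_le_rpow]

theorem abs_fst_le (h : NearResonant μ₁ μ₂) : |μ₁| ≤ max (250 ^ 100) (2 * |μ₂|) := by
  rcases le_or_gt |μ₁| (250 ^ 100) with hsmall | hlarge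
  · exact le_max_of_le_left hsmall
  -- past `250 ^ 100` the resonance window `125 |μ₁| ^ (99/100)` is at most `|μ₁| / 2`
  have h250 : 250 ≤ |μ₁| ^ (1 / 100 : ℝ) := by
    calc (250 : ℝ) = ((250 : ℝ) ^ 100) ^ ((100 : ℕ)⁻¹ : ℝ) :=
          (Real.pow_rpow_inv_natCast (by norm_num) (by norm_num)).symm
      _ ≤ |μ₁| ^ (1 / 100 : ℝ) := by
          rw [one_div]; push_cast
          exact Real.rpow_le_rpow (by positivity) hlarge.le (by norm_num)
  have hwindow : 250 * |μ₁| ^ (99 / 100 : ℝ) ≤ |μ₁| :=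
    calc 250 * |μ₁| ^ (99 / 100 : ℝ) ≤ |μ₁| ^ (1 / 100 : ℝ) * |μ₁| ^ (99 / 100 : ℝ) := by gcongr
      _ = |μ₁| := by rw [← Real.rpow_add (by positivity)]; norm_num
  have htri := abs_sub (μ₁ + μ₂) μ₂
  rw [add_sub_cancel_right] at htri
  exact le_max_of_le_right (by linarith [h.abs_add_le_rpow])

theorem abs_add_le_of_abs_le (h : NearResonant μ₁ μ₂) {K : ℝ} (hK : |μ₁| ≤ K) :
    |μ₁ + μ₂| ≤ 125 * K ^ (99 / 100 : ℝ) :=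
  h.abs_add_le_rpow.trans (by gcongr)

end NearResonant

theorem tsum_indicator_nearResonant_fst_le {N k : ℝ} (hN : 1 ≤ N) (hk : N < |k|) :
    ∑' p : ℤ × ℤ, {p : ℤ × ℤ | p.1 ≠ 0 ∧ p.2 ≠ 0 ∧ NearResonant k (2 * p.1 * p.2)}.indicator
      (fun _ => (ENNReal.ofReal |k|)⁻¹) p ≤
      ENNReal.ofReal (4 * (201 * 125 + 1) * 63 * N ^ (-(1 : ℝ) / 200)) := by
  have hk0 : 0 < |k| := by linarith
  set W := 125 * (63 * |k|) ^ (99 / 100 : ℝ)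
  have hW : 0 ≤ W := by positivity
  have hsub : {p : ℤ × ℤ | p.1 ≠ 0 ∧ p.2 ≠ 0 ∧ NearResonant k (2 * p.1 * p.2)} ⊆
      {p : ℤ × ℤ | p.1 ≠ 0 ∧ p.2 ≠ 0 ∧ |(p.1 : ℝ) * p.2| ≤ 63 * |k| ∧
        (p.1 : ℝ) * p.2 ∈ Icc ((-k - W) / 2) ((-k + W) / 2)} := by
    rintro p ⟨hα, hβ, hres⟩
    obtain ⟨hlo, hhi⟩ := abs_le.1 (hres.abs_add_le_of_abs_le (K := 63 * |k|) (by linarith))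
    have hsnd := hres.abs_snd_le (by linarith)
    rw [mul_assoc, abs_mul, abs_two] at hsnd
    exact ⟨hα, hβ, by linarith, by linarith, by linarith⟩
  have hcount := (ENat.toENNReal_le.2 (encard_le_encard hsub)).trans
    (encard_setOf_mul_mem_Icc_le_rpow (c := 125) (by linarith) (by linarith) (le_of_eq (by ring)))
  rw [← tsum_subtype, ENNReal.tsum_set_const, ← ENNReal.ofReal_inv_of_pos hk0]
  calc _ ≤ ENNReal.ofReal (4 * (201 * 125 + 1) * (63 * |k|) ^ (199 / 200 : ℝ)) *
        ENNReal.ofReal |k|⁻¹ := by gcongr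
    _ ≤ _ := by
        rw [← ENNReal.ofReal_mul (by positivity), mul_assoc, mul_assoc _ 63]
        exact ENNReal.ofReal_le_ofReal <| mul_le_mul_of_nonneg_left
          (rpow_mul_inv_le (by linarith) hk.le (by norm_num) (by positivity) le_rfl) (by norm_num)

theorem tsum_indicator_nearResonant_snd_le {N : ℝ} (hN : 1 ≤ N) (ν : ℝ) :
    ∑' p : ℤ × ℤ, {p : ℤ × ℤ | N < |2 * (p.1 : ℝ) * p.2| ∧ NearResonant (2 * p.1 * p.2) ν}.indicator
      (fun p => (ENNReal.ofReal |2 * (p.1 : ℝ) * p.2|)⁻¹) p ≤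
      ENNReal.ofReal (4 * (201 * 125 + 1) * 250 ^ 100 * N ^ (-(1 : ℝ) / 200)) := by
  set m := max N (|ν| / 126)
  set K : ℝ := max (250 ^ 100) (2 * |ν|)
  set W := 125 * K ^ (99 / 100 : ℝ)
  have hm0 : 0 < m := by positivity
  have hKm : K ≤ 250 ^ 100 * m := max_le
    (le_mul_of_one_le_right (by positivity) (hN.trans (le_max_left _ _)))
    (by have := le_max_right N (|ν| / 126); nlinarith [show (252 : ℝ) ≤ 250 ^ 100 by norm_num])
  -- near resonance pins `μ₁ = 2αβ` between `m` and `K ≤ 250 ^ 100 * m`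
  have key : ∀ p ∈ {p : ℤ × ℤ | N < |2 * (p.1 : ℝ) * p.2| ∧ NearResonant (2 * p.1 * p.2) ν},
      p ∈ {p : ℤ × ℤ | p.1 ≠ 0 ∧ p.2 ≠ 0 ∧ |(p.1 : ℝ) * p.2| ≤ K ∧
        (p.1 : ℝ) * p.2 ∈ Icc ((-ν - W) / 2) ((-ν + W) / 2)} ∧ m ≤ |2 * (p.1 : ℝ) * p.2| := by
    rintro ⟨α, β⟩ ⟨hNt, hres⟩
    dsimp only at hNt hres
    have ht1 : 1 ≤ |2 * (α : ℝ) * β| := hN.trans hNt.le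
    have htK : |2 * (α : ℝ) * β| ≤ K := hres.abs_fst_le
    have hwin : |2 * (α : ℝ) * β + ν| ≤ W := hres.abs_add_le_of_abs_le htK
    obtain ⟨hlo, hhi⟩ := abs_le.1 hwin
    have habs : |2 * (α : ℝ) * β| = 2 * |(α : ℝ) * β| := by rw [mul_assoc, abs_mul, abs_two]
    refine ⟨⟨?_, ?_, by linarith, by linarith, by linarith⟩,
      max_le hNt.le (by linarith [hres.abs_snd_le ht1])⟩
    · rintro rfl; norm_num at ht1
    · rintro rfl; norm_num at ht1
  calc _ ≤ ∑' p : ℤ × ℤ, {p : ℤ × ℤ | p.1 ≠ 0 ∧ p.2 ≠ 0 ∧ |(p.1 : ℝ) * p.2| ≤ K ∧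
        (p.1 : ℝ) * p.2 ∈ Icc ((-ν - W) / 2) ((-ν + W) / 2)}.indicator
          (fun _ => ENNReal.ofReal m⁻¹) p := by
        refine ENNReal.tsum_le_tsum fun p => indicator_le (fun p hp => ?_) p
        rw [indicator_of_mem (key p hp).1, ENNReal.ofReal_inv_of_pos hm0]
        gcongr
        exact (key p hp).2
    _ ≤ ENNReal.ofReal (4 * (201 * 125 + 1) * K ^ (199 / 200 : ℝ)) * ENNReal.ofReal m⁻¹ := by
        rw [← tsum_subtype, ENNReal.tsum_set_const]
        gcongr
        exact encard_setOf_mul_mem_Icc_le_rpow (c := 125) (by linarith [show 0 ≤ W by positivity])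
          (le_max_of_le_left (one_le_pow₀ (by norm_num))) (le_of_eq (by ring))
    _ ≤ _ := by
        rw [← ENNReal.ofReal_mul (by positivity), mul_assoc, mul_assoc _ (250 ^ 100)]
        exact ENNReal.ofReal_le_ofReal <| mul_le_mul_of_nonneg_left
          (rpow_mul_inv_le (by linarith) (le_max_left _ _) (one_le_pow₀ (by norm_num))
            (by positivity) hKm) (by norm_num)

theorem cond9.nearResonant {N : ℝ} {n : ℤ} {q : (ℤ × ℤ × ℤ) × (ℤ × ℤ × ℤ)} (h : cond9 N n q) :
    NearResonant (mu1 n q) (mu2 q) := by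
  have := h.2.2.2.2.2.2.2
  push_cast at this
  exact this

noncomputable def resonantWeight (N : ℝ) (n : ℤ) (q : (ℤ × ℤ × ℤ) × (ℤ × ℤ × ℤ)) : ℝ≥0∞ :=
  {q | cond9 N n q}.indicator (fun q => (ENNReal.ofReal |(mu1 n q : ℝ)|)⁻¹) q

theorem support_resonantWeight_subset (N : ℝ) (n : ℤ) :
    Function.support (resonantWeight N n) ⊆ {q | cond9 N n q} :=
  support_indicator_subset

theorem resonantWeight_of_cond9 {N : ℝ} {n : ℤ} {q : (ℤ × ℤ × ℤ) × (ℤ × ℤ × ℤ)}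
    (h : cond9 N n q) : resonantWeight N n q = (ENNReal.ofReal |(mu1 n q : ℝ)|)⁻¹ :=
  indicator_of_mem (s := {q | cond9 N n q}) h _

/-- The frequencies with `n` given, in the coordinates `(n₂, n₃)` and `(α, β) = (n₁ - m₁, n₁ - m₃)`
of the second generation, in which `μ₂ = 2αβ`. -/
def paramFixedN (n : ℤ) (x : (ℤ × ℤ) × (ℤ × ℤ)) : (ℤ × ℤ × ℤ) × (ℤ × ℤ × ℤ) :=
  ((n + x.1.1 - x.1.2, x.1.1, x.1.2),
    (n + x.1.1 - x.1.2 - x.2.1, n + x.1.1 - x.1.2 - x.2.1 - x.2.2, n + x.1.1 - x.1.2 - x.2.2))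

theorem paramFixedN_injective (n : ℤ) : Function.Injective (paramFixedN n) := by
  rintro ⟨⟨a, b⟩, c, d⟩ ⟨⟨a', b'⟩, c', d'⟩ h
  simp only [paramFixedN, Prod.mk.injEq] at h ⊢
  omega

theorem setOf_cond9_subset_range_paramFixedN (N : ℝ) (n : ℤ) :
    {q | cond9 N n q} ⊆ range (paramFixedN n) := by
  rintro ⟨⟨n₁, n₂, n₃⟩, m₁, m₂, m₃⟩ ⟨h₁, -, -, h₄, -⟩
  simp only at h₁ h₄
  exact ⟨((n₂, n₃), (n₁ - m₁, n₁ - m₃)), by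
    simp only [paramFixedN, Prod.mk.injEq, and_true]; omega⟩

theorem mu1_paramFixedN (n : ℤ) (x : (ℤ × ℤ) × (ℤ × ℤ)) :
    mu1 n (paramFixedN n x) = 2 * (x.1.2 - x.1.1) * (n - x.1.2) := by
  simp only [mu1, paramFixedN]; ring

theorem cast_mu2_paramFixedN (n : ℤ) (x : (ℤ × ℤ) × (ℤ × ℤ)) :
    (mu2 (paramFixedN n x) : ℝ) = 2 * x.2.1 * x.2.2 := by
  simp only [mu2, paramFixedN]; push_cast; ring

theorem tsum_resonantWeight_paramFixedN_le {N : ℝ} (hN : 1 ≤ N) (n : ℤ) (o : ℤ × ℤ) :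
    ∑' p, resonantWeight N n (paramFixedN n (o, p)) ≤
      ENNReal.ofReal (4 * (201 * 125 + 1) * 63 * N ^ (-(1 : ℝ) / 200)) := by
  set k : ℝ := ((2 * (o.2 - o.1) * (n - o.2) : ℤ) : ℝ)
  by_cases hk : N < |k|
  · refine (ENNReal.tsum_le_tsum fun p => ?_).trans (tsum_indicator_nearResonant_fst_le hN hk)
    by_cases hq : cond9 N n (paramFixedN n (o, p))
    · have hres := hq.nearResonant
      rw [mu1_paramFixedN, cast_mu2_paramFixedN] at hres
      rw [resonantWeight_of_cond9 hq, indicator_of_mem, mu1_paramFixedN]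
      obtain ⟨-, -, -, -, h₅, h₆, -⟩ := hq
      refine ⟨?_, ?_, hres⟩
      · rintro h; apply h₆; simp only [paramFixedN, h]; ring
      · rintro h; apply h₅; simp only [paramFixedN, h]; ring
    · simp [resonantWeight, hq]
  · have hzero : ∀ p, resonantWeight N n (paramFixedN n (o, p)) = 0 := fun p =>
      indicator_of_notMem (fun hq => hk (by
        have := hq.2.2.2.2.2.2.1; rwa [mu1_paramFixedN] at this)) _
    simp [hzero]

theorem tsum_resonantWeight_mul_sq_le {N : ℝ} (hN : 1 ≤ N) (a : ℤ → ℝ≥0∞) (n : ℤ) :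
    ∑' q, resonantWeight N n q * (a q.1.2.1 * a q.1.2.2) ^ 2 ≤
      ENNReal.ofReal (4 * (201 * 125 + 1) * 63 * N ^ (-(1 : ℝ) / 200)) * (∑' m, a m ^ 2) ^ 2 := by
  rw [← (paramFixedN_injective n).tsum_eq ((Function.support_mul_subset_left _ _).trans
    ((support_resonantWeight_subset N n).trans (setOf_cond9_subset_range_paramFixedN N n))),
    ENNReal.tsum_prod']
  calc ∑' o, ∑' p, resonantWeight N n (paramFixedN n (o, p)) *
        (a (paramFixedN n (o, p)).1.2.1 * a (paramFixedN n (o, p)).1.2.2) ^ 2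
      = ∑' o : ℤ × ℤ, (∑' p, resonantWeight N n (paramFixedN n (o, p))) *
          (a o.1 ^ 2 * a o.2 ^ 2) := by
        refine tsum_congr fun o => ?_
        rw [← ENNReal.tsum_mul_right]
        exact tsum_congr fun p => by rw [mul_pow]; rfl
    _ ≤ ∑' o : ℤ × ℤ, ENNReal.ofReal (4 * (201 * 125 + 1) * 63 * N ^ (-(1 : ℝ) / 200)) *
          (a o.1 ^ 2 * a o.2 ^ 2) := by
        gcongr with o; exact tsum_resonantWeight_paramFixedN_le hN n o
    _ = _ := by rw [ENNReal.tsum_mul_left, sq, ← ENNReal.tsum_prod_mul_eq_mul_tsum]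

/-- The pairs `(n, frequencies)` in the coordinates `(m₁, m₂, m₃)` and `(α, β) = (n - n₁, n - n₃)`
of the first generation, in which `μ₁ = 2αβ`. -/
def paramFixedM (x : (ℤ × ℤ × ℤ) × (ℤ × ℤ)) : ℤ × (ℤ × ℤ × ℤ) × (ℤ × ℤ × ℤ) :=
  (x.1.1 - x.1.2.1 + x.1.2.2 + x.2.1,
    ((x.1.1 - x.1.2.1 + x.1.2.2, x.1.1 - x.1.2.1 + x.1.2.2 - x.2.2,
      x.1.1 - x.1.2.1 + x.1.2.2 + x.2.1 - x.2.2), x.1))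

theorem paramFixedM_injective : Function.Injective paramFixedM := by
  rintro ⟨⟨a, b, c⟩, d, e⟩ ⟨⟨a', b', c'⟩, d', e'⟩ h
  simp only [paramFixedM, Prod.mk.injEq] at h ⊢
  omega

theorem setOf_cond9_subset_range_paramFixedM (N : ℝ) :
    {x : ℤ × (ℤ × ℤ × ℤ) × (ℤ × ℤ × ℤ) | cond9 N x.1 x.2} ⊆ range paramFixedM := by
  rintro ⟨n, ⟨n₁, n₂, n₃⟩, m₁, m₂, m₃⟩ ⟨h₁, -, -, h₄, -⟩
  simp only at h₁ h₄
  exact ⟨((m₁, m₂, m₃), (n - n₁, n - n₃)), by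
    simp only [paramFixedM, Prod.mk.injEq, and_true]; omega⟩

theorem cast_mu1_paramFixedM (x : (ℤ × ℤ × ℤ) × (ℤ × ℤ)) :
    (mu1 (paramFixedM x).1 (paramFixedM x).2 : ℝ) = 2 * x.2.1 * x.2.2 := by
  simp only [mu1, paramFixedM]; push_cast; ring

theorem mu2_paramFixedM (x : (ℤ × ℤ × ℤ) × (ℤ × ℤ)) :
    mu2 (paramFixedM x).2 = 2 * (x.1.2.2 - x.1.2.1) * (x.1.1 - x.1.2.1) := by
  simp only [mu2, paramFixedM]; ring

theorem tsum_resonantWeight_paramFixedM_le {N : ℝ} (hN : 1 ≤ N) (M : ℤ × ℤ × ℤ) :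
    ∑' p, resonantWeight N (paramFixedM (M, p)).1 (paramFixedM (M, p)).2 ≤
      ENNReal.ofReal (4 * (201 * 125 + 1) * 250 ^ 100 * N ^ (-(1 : ℝ) / 200)) := by
  refine (ENNReal.tsum_le_tsum fun p => ?_).trans
    (tsum_indicator_nearResonant_snd_le hN ((2 * (M.2.2 - M.2.1) * (M.1 - M.2.1) : ℤ) : ℝ))
  by_cases hq : cond9 N (paramFixedM (M, p)).1 (paramFixedM (M, p)).2
  · have hN' := hq.2.2.2.2.2.2.1
    have hres := hq.nearResonant
    rw [cast_mu1_paramFixedM] at hN' hres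
    rw [mu2_paramFixedM] at hres
    rw [resonantWeight_of_cond9 hq, indicator_of_mem, cast_mu1_paramFixedM]
    exact ⟨hN', hres⟩
  · simp [resonantWeight, hq]

theorem tsum_tsum_resonantWeight_mul_sq_le {N : ℝ} (hN : 1 ≤ N) (a : ℤ → ℝ≥0∞) :
    ∑' n, ∑' q, resonantWeight N n q * (a q.2.1 * a q.2.2.1 * a q.2.2.2) ^ 2 ≤
      ENNReal.ofReal (4 * (201 * 125 + 1) * 250 ^ 100 * N ^ (-(1 : ℝ) / 200)) *
        (∑' m, a m ^ 2) ^ 3 := by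
  rw [← ENNReal.tsum_prod
      (f := fun n q => resonantWeight N n q * (a q.2.1 * a q.2.2.1 * a q.2.2.2) ^ 2),
    ← paramFixedM_injective.tsum_eq ((Function.support_mul_subset_left _ _).trans
      (fun x hx => setOf_cond9_subset_range_paramFixedM N
        (support_resonantWeight_subset N x.1 hx))),
    ENNReal.tsum_prod']
  calc _ = ∑' M : ℤ × ℤ × ℤ, (∑' p, resonantWeight N (paramFixedM (M, p)).1
        (paramFixedM (M, p)).2) * (a M.1 ^ 2 * (a M.2.1 ^ 2 * a M.2.2 ^ 2)) := by
        refine tsum_congr fun M => ?_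
        rw [← ENNReal.tsum_mul_right]
        exact tsum_congr fun p => by rw [mul_pow, mul_pow, mul_assoc]; rfl
    _ ≤ ∑' M : ℤ × ℤ × ℤ, ENNReal.ofReal (4 * (201 * 125 + 1) * 250 ^ 100 * N ^ (-(1 : ℝ) / 200)) *
          (a M.1 ^ 2 * (a M.2.1 ^ 2 * a M.2.2 ^ 2)) := by
        gcongr with M; exact tsum_resonantWeight_paramFixedM_le hN M
    _ = _ := by
        rw [ENNReal.tsum_mul_left, pow_three, ← ENNReal.tsum_prod_mul_eq_mul_tsum,
          ← ENNReal.tsum_prod_mul_eq_mul_tsum]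

theorem term9_nonneg (v : ℤ → ℂ) (n : ℤ) (q : (ℤ × ℤ × ℤ) × (ℤ × ℤ × ℤ)) : 0 ≤ term9 v n q := by
  unfold term9; positivity

theorem tsum_enorm_sq_eq {v : ℤ → ℂ} (hv : Memℓ2 v) :
    ∑' m, ‖v m‖ₑ ^ 2 = ENNReal.ofReal (l2norm v ^ 2) := by
  rw [l2norm, Real.sq_sqrt (tsum_nonneg fun _ => sq_nonneg _),
    ENNReal.ofReal_tsum_of_nonneg (fun _ => sq_nonneg _) hv]
  simp [← ofReal_norm, ENNReal.ofReal_pow]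

theorem ofReal_term9_eq {N : ℝ} (hN : 0 ≤ N) (v : ℤ → ℂ) {n : ℤ}
    {q : (ℤ × ℤ × ℤ) × (ℤ × ℤ × ℤ)} (hq : cond9 N n q) :
    ENNReal.ofReal (term9 v n q) = resonantWeight N n q *
      ((‖v q.1.2.1‖ₑ * ‖v q.1.2.2‖ₑ) * (‖v q.2.1‖ₑ * ‖v q.2.2.1‖ₑ * ‖v q.2.2.2‖ₑ)) := by
  rw [resonantWeight_of_cond9 hq, term9, ENNReal.ofReal_mul (by positivity), one_div,
    ENNReal.ofReal_inv_of_pos (hN.trans_lt hq.2.2.2.2.2.2.1)]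
  simp only [← norm_mul, ofReal_norm, enorm_mul]
  ring

theorem tsum_ofReal_term9_eq {N : ℝ} (hN : 0 ≤ N) (v : ℤ → ℂ) (n : ℤ) :
    ∑' q : {q // cond9 N n q}, ENNReal.ofReal (term9 v n q) = ∑' q, resonantWeight N n q *
      ((‖v q.1.2.1‖ₑ * ‖v q.1.2.2‖ₑ) * (‖v q.2.1‖ₑ * ‖v q.2.2.1‖ₑ * ‖v q.2.2.2‖ₑ)) := by
  refine (tsum_subtype {q | cond9 N n q} fun q => ENNReal.ofReal (term9 v n q)).trans
    (tsum_congr fun q => ?_)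
  by_cases hq : cond9 N n q
  · rw [indicator_of_mem (s := {q | cond9 N n q}) hq, ofReal_term9_eq hN v hq]
  · simp [resonantWeight, hq]

theorem tsum_sq_tsum_ofReal_term9_le {N : ℝ} (hN : 1 ≤ N) {v : ℤ → ℂ} (hv : Memℓ2 v) :
    ∑' n, (∑' q : {q // cond9 N n q}, ENNReal.ofReal (term9 v n q)) ^ 2 ≤
      ENNReal.ofReal
        ((4 * (201 * 125 + 1) * 250 ^ 100 * N ^ (-(1 : ℝ) / 200) * l2norm v ^ 5) ^ 2) := by
  have hS := tsum_enorm_sq_eq hv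
  have hA : ∀ n, ∑' q, resonantWeight N n q * (‖v q.1.2.1‖ₑ * ‖v q.1.2.2‖ₑ) ^ 2 ≤
      ENNReal.ofReal (4 * (201 * 125 + 1) * 250 ^ 100 * N ^ (-(1 : ℝ) / 200)) *
        ENNReal.ofReal (l2norm v ^ 2) ^ 2 := by
    intro n
    refine (tsum_resonantWeight_mul_sq_le hN (fun m => ‖v m‖ₑ) n).trans ?_
    rw [hS]
    gcongr
    norm_num
  have hB := tsum_tsum_resonantWeight_mul_sq_le hN fun m => ‖v m‖ₑ
  rw [hS] at hB
  simp_rw [tsum_ofReal_term9_eq (zero_le_one.trans hN)]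
  refine (ENNReal.tsum_sq_tsum_mul_mul_le _ _ _ hA hB).trans_eq ?_
  rw [← ENNReal.ofReal_pow, ← ENNReal.ofReal_pow, ← ENNReal.ofReal_mul, ← ENNReal.ofReal_mul,
    ← ENNReal.ofReal_mul]
  · ring_nf
  all_goals positivity

/-- **Bound on the nearly resonant quintic term of the second generation.** For every
`ε > 0` there is `C > 0` such that for all `N ≥ 1` and `v ∈ ℓ²(ℤ;ℂ)`: `Q(n)` is finite for
each `n`, belongs to `ℓ²(ℤ)`, and `‖Q‖ ≤ C N^{−1/200+ε} ‖v‖⁵`. -/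
theorem N2_1_bound : ∀ ε > (0:ℝ), ∃ C > (0:ℝ), ∀ N : ℝ, 1 ≤ N → ∀ v : ℤ → ℂ, Memℓ2 v →
    (∀ n : ℤ, Summable fun q : {q : (ℤ × ℤ × ℤ) × (ℤ × ℤ × ℤ) // cond9 N n q} =>
      term9 v n q.1) ∧
    Summable (fun n : ℤ => Q9 N v n ^ 2) ∧
    Real.sqrt (∑' n : ℤ, Q9 N v n ^ 2)
      ≤ C * N ^ (-(1:ℝ)/200 + ε) * l2norm v ^ 5 := by
  intro ε hε
  refine ⟨4 * (201 * 125 + 1) * 250 ^ 100, by positivity, fun N hN v hv => ?_⟩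
  obtain ⟨hsummable, hsummable_sq, hle⟩ := tsum_sq_tsum_le_of_tsum_sq_tsum_ofReal_le
    (f := fun n (q : {q // cond9 N n q}) => term9 v n q) (fun n q => term9_nonneg v n q)
    (sq_nonneg _) (tsum_sq_tsum_ofReal_term9_le hN hv)
  refine ⟨hsummable, hsummable_sq, ?_⟩
  have hv5 : 0 ≤ l2norm v ^ 5 := pow_nonneg (Real.sqrt_nonneg _) 5
  calc √(∑' n, Q9 N v n ^ 2)
      ≤ 4 * (201 * 125 + 1) * 250 ^ 100 * N ^ (-(1 : ℝ) / 200) * l2norm v ^ 5 :=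
        Real.sqrt_le_iff.2 ⟨by positivity, hle⟩
    _ ≤ 4 * (201 * 125 + 1) * 250 ^ 100 * N ^ (-(1 : ℝ) / 200 + ε) * l2norm v ^ 5 := by
        gcongr
        linarith
end
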